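/- arXiv:1004.0395 — 12 statements merged into one kernel-verified Lean document; each statement's English description precedes it below -/
import Mathlib

section
/- Fix an integer B ≥ 1. For every n ≥ 1 and every 0 ≤ v ≤ B, the probability p_n(v) that exactly v blocks are collectively held by n independent peers satisfies the recursion p_n(v) = (1/B) · ∑_{h=0}^{min(v, B−1)} ∑_{k=v−h}^{v} p_{n−1}(k) · ψ_h(k,v), with base case p_0(0) = 1 and p_0(v) = 0 for v ≠ 0. -/
/-- Single-peer block-ownership distribution in the `γ = ∞` model: a peer owning
`h ≤ B - 1` blocks has a uniformly random `h`-element subset, with `h` uniform on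
`{0, …, B-1}`; the full set has probability `0`. -/
noncomputable def wmu (B : ℕ) (s : Finset (Fin B)) : ℝ :=
  if s.card < B then 1 / (B * (B.choose s.card)) else 0

/-- `pmu B n v` : probability that exactly `v` blocks are collectively held by `n`
independent peers, each with block set drawn from `wmu B`. -/
noncomputable def pmu (B n v : ℕ) : ℝ :=
  ∑ f : Fin n → Finset (Fin B),
    if (Finset.univ.biUnion f).card = v then ∏ u, wmu B (f u) else 0

/-- The hypergeometric probability `ψ_h(k,v) = C(k, h-v+k) C(B-k, v-k) / C(B,h)`
(zero when `v < k` or `v > h + k`). -/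
noncomputable def psi (B h k v : ℕ) : ℝ :=
  if k ≤ v ∧ v ≤ h + k then
    ((k.choose (h + k - v) : ℝ) * ((B - k).choose (v - k) : ℝ)) / (B.choose h)
  else 0

/-! Condition on the union `T` of the first `n - 1` peers, say `#T = k`. A new peer's set `s` of
size `h` gives `#(s ∪ T) = v` exactly when it has `h + k - v` elements inside `T` and `v - k`
outside, so there are `C(k, h + k - v) * C(B - k, v - k) = C(B, h) * ψ_h(k, v)` such sets, each of
weight `1 / (B * C(B, h))`. -/

open Finset

theorem card_filter_card_union_eq {α : Type*} [Fintype α] [DecidableEq α] (T : Finset α)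
    (h v : ℕ) :
    #{s ∈ powersetCard h univ | #(s ∪ T) = v} =
      if #T ≤ v ∧ v ≤ h + #T then
        (#T).choose (h + #T - v) * (Fintype.card α - #T).choose (v - #T) else 0 := by
  split_ifs with hvT
  · have split_union : ∀ a ⊆ T, ∀ b ⊆ Tᶜ, (a ∪ b) ∩ T = a ∧ (a ∪ b) \ T = b := by
      intro a ha b hb
      have hbT : Disjoint b T := subset_compl_iff_disjoint_right.mp hb
      exact ⟨by rw [union_inter_distrib_right, inter_eq_left.2 ha,
          disjoint_iff_inter_eq_empty.1 hbT, union_empty],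
        by rw [union_sdiff_distrib, sdiff_eq_empty_iff_subset.2 ha, hbT.sdiff_eq_left,
          empty_union]⟩
    rw [← card_compl, ← card_powersetCard, ← card_powersetCard, ← card_product]
    refine card_nbij' (fun s => (s ∩ T, s \ T)) (fun p => p.1 ∪ p.2) ?_ ?_ ?_ ?_ <;>
      simp only [Set.MapsTo, Set.LeftInvOn, mem_coe, mem_filter, mem_product, mem_powersetCard,
        subset_univ, true_and]
    · intro s ⟨hs, hsT⟩
      have hcard := card_inter_add_card_sdiff s T
      have hcard_union := card_sdiff_add_card s T
      exact ⟨⟨inter_subset_right, by omega⟩, fun x hx => by simp_all, by omega⟩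
    · rintro ⟨a, b⟩ ⟨⟨haT, ha⟩, hbT, hb⟩
      obtain ⟨hinter, hsdiff⟩ := split_union a haT b hbT
      have hcard := card_inter_add_card_sdiff (a ∪ b) T
      have hcard_union := card_sdiff_add_card (a ∪ b) T
      rw [hinter, hsdiff] at hcard
      rw [hsdiff] at hcard_union
      dsimp only at *
      omega
    · intro s _
      rw [union_comm, sdiff_union_inter]
    · rintro ⟨a, b⟩ ⟨⟨haT, -⟩, hbT, -⟩
      obtain ⟨hinter, hsdiff⟩ := split_union a haT b hbT
      rw [hinter, hsdiff]
  · rw [card_eq_zero, filter_eq_empty_iff]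
    intro s hs
    have hcard_union := card_sdiff_add_card s T
    have hcard_sdiff := card_le_card (sdiff_subset : s \ T ⊆ s)
    rw [(mem_powersetCard.1 hs).2] at hcard_sdiff
    omega

theorem choose_mul_psi {B h : ℕ} (hh : h ≤ B) (k v : ℕ) :
    (B.choose h : ℝ) * psi B h k v =
      ((if k ≤ v ∧ v ≤ h + k then k.choose (h + k - v) * (B - k).choose (v - k) else 0 : ℕ) :
        ℝ) := by
  have hchoose : (B.choose h : ℝ) ≠ 0 := by exact_mod_cast (Nat.choose_pos hh).ne'
  unfold psi
  split_ifs
  · push_cast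
    field_simp
  · simp

theorem card_filter_card_union_eq_choose_mul_psi {α : Type*} [Fintype α] [DecidableEq α]
    (T : Finset α) {h : ℕ} (hh : h ≤ Fintype.card α) (v : ℕ) :
    (#{s ∈ powersetCard h univ | #(s ∪ T) = v} : ℝ) =
      (Fintype.card α).choose h * psi (Fintype.card α) h #T v := by
  rw [card_filter_card_union_eq, choose_mul_psi hh]

theorem sum_wmu_of_card_union_eq {B : ℕ} (T : Finset (Fin B)) (v : ℕ) :
    ∑ s, (if #(s ∪ T) = v then wmu B s else 0) = 1 / B * ∑ h ∈ range B, psi B h #T v := by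
  have fiber : ∀ h < B, ∑ s ∈ powersetCard h univ, (if #(s ∪ T) = v then wmu B s else 0) =
      1 / B * psi B h #T v := by
    intro h hh
    have hchoose : (B.choose h : ℝ) ≠ 0 := by exact_mod_cast (Nat.choose_pos hh.le).ne'
    calc ∑ s ∈ powersetCard h univ, (if #(s ∪ T) = v then wmu B s else 0)
        = ∑ s ∈ powersetCard h univ with #(s ∪ T) = v, 1 / (B * B.choose h : ℝ) := by
          rw [sum_filter]
          refine sum_congr rfl fun s hs => ?_
          rw [wmu, mem_powersetCard_univ.1 hs, if_pos hh]
      _ = 1 / B * psi B h #T v := by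
          rw [sum_const, nsmul_eq_mul,
            card_filter_card_union_eq_choose_mul_psi T (by simpa using hh.le), Fintype.card_fin]
          field_simp
  rw [← sum_fiberwise_of_maps_to (g := card) (t := range (B + 1))
    (fun s _ => mem_range_succ_iff.2 (by simpa using card_le_univ s)), sum_range_succ, mul_sum]
  rw [sum_eq_zero (s := {s | #s = B}) fun s hs => by simp [wmu, (mem_filter.1 hs).2], add_zero]
  refine sum_congr rfl fun h hh => ?_
  rw [← fiber h (mem_range.1 hh), ← powerset_univ, powersetCard_eq_filter]

theorem biUnion_univ_cons {α : Type*} [DecidableEq α] {m : ℕ} (x : Finset α)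
    (g : Fin m → Finset α) :
    univ.biUnion (Fin.cons x g : Fin (m + 1) → Finset α) = x ∪ univ.biUnion g := by
  ext a
  simp [Fin.exists_fin_succ]

theorem sum_prod_wmu_mul_eq_sum_pmu_mul (B m : ℕ) (G : ℕ → ℝ) :
    ∑ g : Fin m → Finset (Fin B), (∏ u, wmu B (g u)) * G #(univ.biUnion g) =
      ∑ k ∈ range (B + 1), pmu B m k * G k := by
  rw [← sum_fiberwise_of_maps_to (g := fun g => #(univ.biUnion g)) (t := range (B + 1))
    (fun g _ => mem_range_succ_iff.2 (by simpa using card_le_univ (univ.biUnion g)))]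
  refine sum_congr rfl fun k _ => ?_
  simp_rw [pmu, sum_mul, ite_mul, zero_mul]
  rw [← sum_filter]
  refine sum_congr rfl fun g hg => ?_
  rw [(mem_filter.1 hg).2]

theorem pmu_succ (B m v : ℕ) :
    pmu B (m + 1) v = ∑ k ∈ range (B + 1), pmu B m k * (1 / B * ∑ h ∈ range B, psi B h k v) := by
  rw [← sum_prod_wmu_mul_eq_sum_pmu_mul, pmu,
    ← (Fin.consEquiv fun _ => Finset (Fin B)).sum_comp, Fintype.sum_prod_type, sum_comm]
  refine sum_congr rfl fun g _ => ?_
  rw [← sum_wmu_of_card_union_eq, mul_sum]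
  refine sum_congr rfl fun x _ => ?_
  rw [show (Fin.consEquiv fun _ => Finset (Fin B)) (x, g) = Fin.cons x g from rfl,
    biUnion_univ_cons, Fin.prod_univ_succ]
  simp only [Fin.cons_zero, Fin.cons_succ]
  split_ifs <;> ring

theorem psi_eq_zero {B h k v : ℕ} (hsupp : ¬(h ≤ v ∧ k ≤ v ∧ v ≤ h + k)) : psi B h k v = 0 := by
  unfold psi
  split_ifs
  · rw [Nat.choose_eq_zero_of_lt (by omega : k < h + k - v), Nat.cast_zero, zero_mul, zero_div]
  · rfl

/-- for `B ≥ 1`, `n ≥ 1` and `0 ≤ v ≤ B`,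
`p_n(v) = (1/B) ∑_{h=0}^{min(v,B-1)} ∑_{k=v-h}^{v} p_{n-1}(k) ψ_h(k,v)`,
with base case `p_0(0) = 1` and `p_0(v) = 0` for `v ≠ 0`. -/
theorem stmt0 (B : ℕ) (hB : 1 ≤ B) (n : ℕ) (hn : 1 ≤ n) (v : ℕ) (hv : v ≤ B) :
    pmu B n v =
      (1 / (B : ℝ)) * (∑ h ∈ Finset.range (min v (B - 1) + 1),
        ∑ k ∈ Finset.Icc (v - h) v, pmu B (n - 1) k * psi B h k v) ∧
    pmu B 0 0 = 1 ∧ (∀ w : ℕ, w ≠ 0 → pmu B 0 w = 0) := by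
  refine ⟨?_, by simp [pmu], fun w hw => by simp [pmu, hw.symm]⟩
  obtain ⟨m, rfl⟩ := Nat.exists_eq_add_of_le' hn
  calc pmu B (m + 1) v
      = 1 / B * ∑ h ∈ range B, ∑ k ∈ range (B + 1), pmu B m k * psi B h k v := by
        simp_rw [pmu_succ, mul_sum, sum_comm (s := range (B + 1)), mul_left_comm]
    _ = 1 / B * ∑ h ∈ range B, ∑ k ∈ Icc (v - h) v, pmu B m k * psi B h k v := by
        congr 1
        refine sum_congr rfl fun h _ => (sum_subset (fun k hk => ?_) fun k _ hk => ?_).symm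
        · simp only [mem_Icc, mem_range] at hk ⊢
          omega
        · rw [psi_eq_zero (by simp only [mem_Icc] at hk; omega), mul_zero]
    _ = _ := by
        congr 1
        refine (sum_subset (fun h hh => ?_) fun h hhB hh => sum_eq_zero fun k _ => ?_).symm
        · simp only [mem_range] at hh ⊢
          omega
        · simp only [mem_range] at hhB hh
          rw [psi_eq_zero (by omega), mul_zero]
end

section
/- Fix an integer B ≥ 1. For every n ≥ 1: p_n(0) = B^{−n}; for every 0 < v < B, p_n(v) = p_n(v−1) + p_{n−1}(v) · (B+1)/(B·(B−v+1)); and p_n(B) = 1 − ∑_{v=0}^{B−1} p_n(v). -/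
open Finset

section Moebius

variable {α M : Type*} [DecidableEq α] [AddCommGroup M]

lemma sum_neg_one_pow_card_sdiff_of_subset {A S : Finset α} (hAS : A ⊆ S) :
    ∑ T ∈ S.powerset with A ⊆ T, (-1 : ℤ) ^ #(S \ T) = if A = S then 1 else 0 := by
  have hreindex : ∑ T ∈ S.powerset with A ⊆ T, (-1 : ℤ) ^ #(S \ T)
      = ∑ U ∈ (S \ A).powerset, (-1 : ℤ) ^ #U := by
    refine sum_nbij' (S \ ·) (S \ ·) ?_ ?_ ?_ ?_ fun _ _ => rfl
    · intro T hT
      simp only [mem_filter, mem_powerset] at hT ⊢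
      exact sdiff_subset_sdiff le_rfl hT.2
    · intro U hU
      simp only [mem_filter, mem_powerset] at hU ⊢
      exact ⟨sdiff_subset, subset_sdiff.2 ⟨hAS, (disjoint_of_subset_left hU sdiff_disjoint).symm⟩⟩
    · intro T hT
      simp only [mem_filter, mem_powerset] at hT
      exact Finset.sdiff_sdiff_eq_self hT.1
    · intro U hU
      simp only [mem_powerset] at hU
      exact Finset.sdiff_sdiff_eq_self (hU.trans sdiff_subset)
  rw [hreindex, sum_powerset_neg_one_pow_card]
  by_cases hA : A = S
  · simp [hA]
  · rw [if_neg hA, if_neg]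
    exact fun h => hA (hAS.antisymm (sdiff_eq_empty_iff_subset.1 h))

lemma moebius_inversion_powerset (f g : Finset α → M)
    (h : ∀ T, g T = ∑ A ∈ T.powerset, f A) (S : Finset α) :
    f S = ∑ T ∈ S.powerset, (-1 : ℤ) ^ #(S \ T) • g T := by
  symm
  calc ∑ T ∈ S.powerset, (-1 : ℤ) ^ #(S \ T) • g T
      = ∑ T ∈ S.powerset, ∑ A ∈ T.powerset, (-1 : ℤ) ^ #(S \ T) • f A := by
        simp_rw [h, smul_sum]
    _ = ∑ A ∈ S.powerset, ∑ T ∈ S.powerset with A ⊆ T, (-1 : ℤ) ^ #(S \ T) • f A := by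
        refine sum_comm' fun T A => ?_
        simp only [mem_powerset, mem_filter]
        exact ⟨fun ⟨hT, hA⟩ => ⟨⟨hT, hA⟩, hA.trans hT⟩, fun ⟨hTA, _⟩ => hTA⟩
    _ = ∑ A ∈ S.powerset, (if A = S then (1 : ℤ) else 0) • f A := by
        refine sum_congr rfl fun A hA => ?_
        rw [← sum_smul, sum_neg_one_pow_card_sdiff_of_subset (mem_powerset.1 hA)]
    _ = f S := by simp

end Moebius

section Union

variable {α R : Type*} [Fintype α] [DecidableEq α] [CommSemiring R]

noncomputable def unionMass (w : Finset α → R) (n : ℕ) (S : Finset α) : R :=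
  ∑ f : Fin n → Finset α, if univ.biUnion f = S then ∏ u, w (f u) else 0

lemma sum_ite_biUnion_subset (w : Finset α → R) (n : ℕ) (T : Finset α) :
    (∑ f : Fin n → Finset α, if univ.biUnion f ⊆ T then ∏ u, w (f u) else 0)
      = (∑ s ∈ T.powerset, w s) ^ n := by
  calc (∑ f : Fin n → Finset α, if univ.biUnion f ⊆ T then ∏ u, w (f u) else 0)
      = ∑ f : Fin n → Finset α, ∏ u, if f u ⊆ T then w (f u) else 0 := by
        refine sum_congr rfl fun f _ => ?_
        rw [Fintype.prod_ite_zero]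
        simp only [biUnion_subset, mem_univ, true_implies]
        congr
    _ = (∑ s, if s ⊆ T then w s else 0) ^ n :=
        (Fintype.sum_pow (fun s => if s ⊆ T then w s else 0) n).symm
    _ = (∑ s ∈ T.powerset, w s) ^ n := by
        rw [← sum_filter]
        congr 2
        ext s
        simp

lemma sum_powerset_unionMass (w : Finset α → R) (n : ℕ) (T : Finset α) :
    ∑ S ∈ T.powerset, unionMass w n S = (∑ s ∈ T.powerset, w s) ^ n := by
  rw [← sum_ite_biUnion_subset]
  unfold unionMass
  rw [sum_comm]
  refine sum_congr rfl fun f _ => ?_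
  simp only [sum_ite_eq, mem_powerset]

end Union

lemma unionMass_eq_sum_powerset {α R : Type*} [Fintype α] [DecidableEq α] [CommRing R]
    (w : Finset α → R) (n : ℕ) (S : Finset α) :
    unionMass w n S
      = ∑ T ∈ S.powerset, (-1 : R) ^ (#S - #T) * (∑ s ∈ T.powerset, w s) ^ n := by
  rw [moebius_inversion_powerset _ _ (fun T => (sum_powerset_unionMass w n T).symm)]
  refine sum_congr rfl fun T hT => ?_
  rw [card_sdiff_of_subset (mem_powerset.1 hT), zsmul_eq_mul]
  push_cast
  rfl

lemma sum_range_choose_sub_sub {B t : ℕ} (ht : t ≤ B) :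
    ∑ m ∈ range (t + 1), (B - m).choose (t - m) = (B + 1).choose t := by
  rw [← sum_range_reflect]
  have hterm : ∀ i ∈ range (t + 1),
      (B - (t + 1 - 1 - i)).choose (t - (t + 1 - 1 - i)) = (i + (B - t)).choose (B - t) := by
    intro i hi
    have hit := mem_range.1 hi
    rw [show B - (t + 1 - 1 - i) = i + (B - t) by omega, show t - (t + 1 - 1 - i) = i by omega,
      Nat.choose_symm_add]
  rw [sum_congr rfl hterm, Nat.sum_range_add_choose, show t + (B - t) + 1 = B + 1 by omega]
  exact Nat.choose_symm_of_eq_add (by omega)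

noncomputable def subsetProb (B t : ℕ) : ℝ := (B + 1) / (B * (B + 1 - t))

lemma sum_powerset_wmu {B : ℕ} (T : Finset (Fin B)) (hT : #T < B) :
    ∑ s ∈ T.powerset, wmu B s = subsetProb B #T := by
  set t := #T
  have hB : (0 : ℝ) < B := by exact_mod_cast Nat.zero_lt_of_lt hT
  have hCt : (0 : ℝ) < B.choose t := by exact_mod_cast Nat.choose_pos hT.le
  calc ∑ s ∈ T.powerset, wmu B s
      = ∑ s ∈ T.powerset, 1 / ((B : ℝ) * B.choose #s) :=
        sum_congr rfl fun s hs => if_pos ((card_le_card (mem_powerset.1 hs)).trans_lt hT)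
    _ = ∑ m ∈ range (t + 1), t.choose m • (1 / ((B : ℝ) * B.choose m)) :=
        sum_powerset_apply_card (fun m => 1 / ((B : ℝ) * B.choose m))
    _ = ∑ m ∈ range (t + 1), ((B - m).choose (t - m) : ℝ) / (B * B.choose t) := by
        refine sum_congr rfl fun m hm => ?_
        have hmt : m ≤ t := Nat.lt_succ_iff.1 (mem_range.1 hm)
        have hCm : (0 : ℝ) < B.choose m := by exact_mod_cast Nat.choose_pos (hmt.trans hT.le)
        have h : (B.choose t * t.choose m : ℝ) = B.choose m * (B - m).choose (t - m) := by
          exact_mod_cast Nat.choose_mul hmt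
        rw [nsmul_eq_mul, mul_one_div, div_eq_div_iff (by positivity) (by positivity)]
        linear_combination B * h
    _ = ((B + 1).choose t : ℝ) / (B * B.choose t) := by
        rw [← sum_div, ← sum_range_choose_sub_sub hT.le]
        push_cast
        rfl
    _ = subsetProb B t := by
        have h := congrArg (Nat.cast : ℕ → ℝ) (Nat.choose_mul_succ_eq B t)
        push_cast [Nat.cast_sub (by omega : t ≤ B + 1)] at h
        have htB : (t : ℝ) < B := by exact_mod_cast hT
        rw [subsetProb, div_eq_div_iff (by positivity) (by nlinarith)]
        linear_combination (-B : ℝ) * h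

lemma sum_wmu {B : ℕ} (hB : 1 ≤ B) : ∑ s, wmu B s = 1 := by
  have hB' : (B : ℝ) ≠ 0 := by positivity
  calc ∑ s, wmu B s
      = ∑ s ∈ (univ : Finset (Fin B)).powerset,
          (fun m => if m < B then 1 / ((B : ℝ) * B.choose m) else 0) #s := by
        rw [powerset_univ]; rfl
    _ = ∑ m ∈ range B, B.choose m • (1 / ((B : ℝ) * B.choose m)) := by
        rw [sum_powerset_apply_card (fun m => if m < B then 1 / ((B : ℝ) * B.choose m) else 0),
          card_univ, Fintype.card_fin, sum_range_succ]
        simp only [lt_irrefl, if_false, smul_zero, add_zero]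
        exact sum_congr rfl fun m hm => by rw [if_pos (mem_range.1 hm)]
    _ = ∑ _m ∈ range B, 1 / (B : ℝ) := by
        refine sum_congr rfl fun m hm => ?_
        have : (B.choose m : ℝ) ≠ 0 := by
          exact_mod_cast (Nat.choose_pos (mem_range.1 hm).le).ne'
        rw [nsmul_eq_mul]
        field_simp
    _ = 1 := by rw [sum_const, card_range, nsmul_eq_mul, mul_one_div_cancel hB']

lemma pmu_eq_sum_unionMass (B n v : ℕ) :
    pmu B n v = ∑ S ∈ powersetCard v univ, unionMass (wmu B) n S := by
  unfold pmu unionMass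
  rw [sum_comm]
  refine sum_congr rfl fun f _ => ?_
  simp only [sum_ite_eq, mem_powersetCard_univ]

lemma sum_range_pmu {B : ℕ} (hB : 1 ≤ B) (n : ℕ) :
    ∑ v ∈ range (B + 1), pmu B n v = 1 := by
  calc ∑ v ∈ range (B + 1), pmu B n v
      = ∑ f : Fin n → Finset (Fin B), ∏ u, wmu B (f u) := by
        unfold pmu
        rw [sum_comm]
        refine sum_congr rfl fun f _ => ?_
        rw [sum_ite_eq, if_pos]
        simpa [Nat.lt_succ_iff] using card_le_univ (univ.biUnion f)
    _ = (∑ s, wmu B s) ^ n := (Fintype.sum_pow (wmu B) n).symm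
    _ = 1 := by rw [sum_wmu hB, one_pow]

noncomputable def pmuFormula (B n v : ℕ) : ℝ :=
  ∑ j ∈ range (v + 1), (-1 : ℝ) ^ (v - j) * B.choose v * v.choose j * subsetProb B j ^ n

lemma pmu_eq_pmuFormula {B v : ℕ} (hv : v < B) (n : ℕ) : pmu B n v = pmuFormula B n v := by
  have hS : ∀ S ∈ powersetCard v (univ : Finset (Fin B)), unionMass (wmu B) n S
      = ∑ j ∈ range (v + 1), v.choose j • ((-1 : ℝ) ^ (v - j) * subsetProb B j ^ n) := by
    intro S hS
    rw [mem_powersetCard_univ] at hS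
    rw [unionMass_eq_sum_powerset, ← hS, ← sum_powerset_apply_card]
    refine sum_congr rfl fun T hT => ?_
    rw [sum_powerset_wmu T ((card_le_card (mem_powerset.1 hT)).trans_lt (hS ▸ hv))]
  rw [pmu_eq_sum_unionMass, sum_congr rfl hS, sum_const, card_powersetCard, card_univ,
    Fintype.card_fin, pmuFormula, smul_sum]
  refine sum_congr rfl fun j _ => ?_
  simp only [nsmul_eq_mul]
  ring

lemma choose_mul_subsetProb_sub {B w j : ℕ} (hj : j ≤ w) (hw : w < B) :
    (B.choose (w + 1) * (w + 1).choose j : ℝ) * (subsetProb B (w + 1) - subsetProb B j)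
      = B.choose w * w.choose j * subsetProb B j := by
  have hB : (0 : ℝ) < B := by exact_mod_cast Nat.zero_lt_of_lt hw
  have hwB : (0 : ℝ) < B - w := by
    have : (w : ℝ) < B := by exact_mod_cast hw
    linarith
  have hjB : (0 : ℝ) < B + 1 - j := by
    have : (j : ℝ) < B := by exact_mod_cast hj.trans_lt hw
    linarith
  have h₁ := congrArg (Nat.cast : ℕ → ℝ) (Nat.choose_succ_right_eq B w)
  have h₂ := congrArg (Nat.cast : ℕ → ℝ) (Nat.choose_mul_succ_eq w j)
  push_cast [Nat.cast_sub hw.le, Nat.cast_sub (by omega : j ≤ w + 1)] at h₁ h₂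
  unfold subsetProb
  push_cast
  rw [show (B : ℝ) + 1 - (w + 1) = B - w by ring]
  field_simp
  linear_combination (w.choose j : ℝ) * h₁ - (B.choose (w + 1) : ℝ) * h₂

lemma pmuFormula_succ_succ {B w : ℕ} (hw : w < B) (m : ℕ) :
    pmuFormula B (m + 1) (w + 1)
      = pmuFormula B (m + 1) w + subsetProb B (w + 1) * pmuFormula B m (w + 1) := by
  set g := subsetProb B
  have hterm (j : ℕ) (hj : j ∈ range (w + 1)) :
      (-1 : ℝ) ^ (w + 1 - j) * B.choose (w + 1) * (w + 1).choose j * g j ^ (m + 1) =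
        (-1 : ℝ) ^ (w - j) * B.choose w * w.choose j * g j ^ (m + 1) +
        g (w + 1) * ((-1) ^ (w + 1 - j) * B.choose (w + 1) * (w + 1).choose j * g j ^ m) := by
    have hjw := Nat.lt_succ_iff.1 (mem_range.1 hj)
    rw [show w + 1 - j = w - j + 1 by omega, pow_succ, pow_succ]
    linear_combination (-1 : ℝ) ^ (w - j) * g j ^ m * choose_mul_subsetProb_sub hjw hw
  unfold pmuFormula
  rw [sum_range_succ, sum_congr rfl hterm, sum_add_distrib, sum_range_succ (n := w + 1), mul_add,
    mul_sum]
  simp only [Nat.sub_self, pow_zero, Nat.choose_self, Nat.cast_one]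
  ring

/-- for `B ≥ 1` and `n ≥ 1`: `p_n(0) = B⁻ⁿ`; for `0 < v < B`,
`p_n(v) = p_n(v-1) + p_{n-1}(v) (B+1)/(B(B-v+1))`; and
`p_n(B) = 1 - ∑_{v=0}^{B-1} p_n(v)`. -/
theorem stmt1 (B : ℕ) (hB : 1 ≤ B) (n : ℕ) (hn : 1 ≤ n) :
    pmu B n 0 = 1 / (B : ℝ) ^ n ∧
    (∀ v : ℕ, 0 < v → v < B →
      pmu B n v = pmu B n (v - 1) +
        pmu B (n - 1) v * ((B : ℝ) + 1) / ((B : ℝ) * ((B : ℝ) - v + 1))) ∧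
    pmu B n B = 1 - ∑ v ∈ Finset.range B, pmu B n v := by
  refine ⟨?_, ?_, ?_⟩
  · have hg : subsetProb B 0 = 1 / B := by
      rw [subsetProb, Nat.cast_zero, sub_zero, mul_comm, ← div_div, div_self (by positivity)]
    simp [pmu_eq_pmuFormula hB, pmuFormula, hg]
  · intro v hv hvB
    obtain ⟨w, rfl⟩ : ∃ w, v = w + 1 := ⟨v - 1, by omega⟩
    obtain ⟨m, rfl⟩ : ∃ m, n = m + 1 := ⟨n - 1, by omega⟩
    rw [pmu_eq_pmuFormula hvB, pmu_eq_pmuFormula (by omega), pmu_eq_pmuFormula hvB,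
      add_tsub_cancel_right, add_tsub_cancel_right, pmuFormula_succ_succ (by omega)]
    simp only [subsetProb]
    push_cast
    ring
  · linarith [sum_range_succ (pmu B n) B, sum_range_pmu hB n]
end

section
/- For all integers B ≥ 1 and 0 ≤ k ≤ v ≤ B, the full sum satisfies ∑_{h=0}^{B} ψ_h(k,v) = (B+1)/(B−k+1); consequently ∑_{h=0}^{B−1} ψ_h(k,v) = (B+1)/(B−k+1) when v ≤ B−1, and ∑_{h=0}^{B−1} ψ_h(k,B) = k/(B−k+1) when v = B. -/
open Finset

theorem Nat.sum_antidiagonal_choose_mul_choose (a b n : ℕ) :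
    ∑ ij ∈ antidiagonal n, ij.1.choose a * ij.2.choose b = (n + 1).choose (a + b + 1) := by
  induction n generalizing b with
  | zero => cases a <;> cases b <;> simp [Nat.choose_eq_zero_of_lt]
  | succ n ih =>
    rw [Nat.sum_antidiagonal_succ']
    cases b with
    | zero =>
      have ih₀ := ih 0
      simp only [Nat.choose_zero_right, mul_one] at ih₀ ⊢
      rw [ih₀]
      exact (Nat.choose_succ_succ' _ _).symm
    | succ b =>
      simp only [Nat.choose_zero_succ, mul_zero, zero_add, Nat.choose_succ_succ' _ b, mul_add,
        sum_add_distrib, ih]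
      exact (Nat.choose_succ_succ' _ _).symm

theorem Nat.sum_range_choose_mul_choose (a b n : ℕ) :
    ∑ h ∈ range (n + 1), h.choose a * (n - h).choose b = (n + 1).choose (a + b + 1) := by
  rw [← Nat.sum_antidiagonal_eq_sum_range_succ (fun i j => i.choose a * j.choose b),
    Nat.sum_antidiagonal_choose_mul_choose]

theorem Nat.choose_mul_choose_mul_add_choose_comm (a b c d : ℕ) :
    (a + b).choose a * (c + d).choose c * (a + b + (c + d)).choose (a + b) =
      (a + c).choose a * (b + d).choose b * (a + b + (c + d)).choose (a + c) := by
  apply Nat.cast_injective (R := ℚ)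
  push_cast
  rw [Nat.cast_choose ℚ (show a + c ≤ a + b + (c + d) by omega),
    show a + b + (c + d) - (a + c) = b + d by omega]
  simp only [Nat.cast_add_choose]
  field_simp

theorem Nat.cast_succ_choose_div_choose {n k : ℕ} (hk : k ≤ n) :
    ((n + 1).choose k : ℝ) / n.choose k = ((n : ℝ) + 1) / ((n : ℝ) - k + 1) := by
  have hsub : ((n + 1 - k : ℕ) : ℝ) = (n : ℝ) - k + 1 := by
    rw [Nat.cast_sub (by omega)]
    push_cast
    ring
  have hchoose : (n.choose k : ℝ) ≠ 0 := by exact_mod_cast (Nat.choose_pos hk).ne'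
  have hnk : (n : ℝ) - k + 1 ≠ 0 := by
    rw [← hsub]
    exact_mod_cast (by omega : n + 1 - k ≠ 0)
  rw [div_eq_div_iff hchoose hnk, ← hsub, mul_comm ((n : ℝ) + 1)]
  exact_mod_cast (Nat.choose_mul_succ_eq n k).symm

theorem psi_eq_choose_mul_choose_div {B h k v : ℕ} (hhB : h ≤ B) (hkv : k ≤ v) (hvB : v ≤ B) :
    psi B h k v = (h.choose (v - k) * (B - h).choose (B - v) : ℕ) / B.choose k := by
  have hBk : (B.choose k : ℝ) ≠ 0 := by exact_mod_cast (Nat.choose_pos (hkv.trans hvB)).ne'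
  unfold psi
  split_ifs with hv
  · rcases lt_or_ge v h with hvh | hhv
    · rw [Nat.choose_eq_zero_of_lt (show k < h + k - v by omega),
        Nat.choose_eq_zero_of_lt (show B - h < B - v by omega)]
      simp
    -- the sizes of `H ∩ K`, `K \ H`, `H \ K` and of the complement of `H ∪ K`
    obtain ⟨i, c, d, e, rfl, rfl, rfl, rfl⟩ :
        ∃ i c d e, h = i + d ∧ k = i + c ∧ v = i + c + d ∧ B = i + c + (d + e) :=
      ⟨h + k - v, v - h, v - k, B - v, by omega, by omega, by omega, by omega⟩
    have hBh : ((i + c + (d + e)).choose (i + d) : ℝ) ≠ 0 := by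
      exact_mod_cast (Nat.choose_pos (by omega)).ne'
    rw [div_eq_div_iff hBh hBk, show i + d + (i + c) - (i + c + d) = i by omega,
      show i + c + (d + e) - (i + c) = d + e by omega, show i + c + d - (i + c) = d by omega,
      show i + c + (d + e) - (i + d) = c + e by omega,
      show i + c + (d + e) - (i + c + d) = e by omega, ← Nat.choose_symm_add (a := i),
      ← Nat.choose_symm_add (a := c)]
    exact_mod_cast Nat.choose_mul_choose_mul_add_choose_comm i c d e
  · rw [Nat.choose_eq_zero_of_lt (n := h) (by omega)]
    simp

theorem sum_range_psi {B k v : ℕ} (hkv : k ≤ v) (hvB : v ≤ B) :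
    ∑ h ∈ range (B + 1), psi B h k v = ((B : ℝ) + 1) / ((B : ℝ) - k + 1) := calc
  _ = ∑ h ∈ range (B + 1),
        ((h.choose (v - k) * (B - h).choose (B - v) : ℕ) : ℝ) / B.choose k :=
      sum_congr rfl fun h hh => psi_eq_choose_mul_choose_div (mem_range_succ_iff.1 hh) hkv hvB
  _ = ((B + 1).choose k : ℝ) / B.choose k := by
      rw [← sum_div, ← Nat.cast_sum, Nat.sum_range_choose_mul_choose,
        Nat.choose_symm_of_eq_add (show B + 1 = v - k + (B - v) + 1 + k by omega)]
  _ = ((B : ℝ) + 1) / ((B : ℝ) - k + 1) := Nat.cast_succ_choose_div_choose (hkv.trans hvB)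

/-- for `B ≥ 1` and `0 ≤ k ≤ v ≤ B`,
`∑_{h=0}^{B} ψ_h(k,v) = (B+1)/(B-k+1)`; consequently
`∑_{h=0}^{B-1} ψ_h(k,v) = (B+1)/(B-k+1)` when `v ≤ B-1`, and
`∑_{h=0}^{B-1} ψ_h(k,B) = k/(B-k+1)` when `v = B`. -/
theorem stmt3 (B k v : ℕ) (hB : 1 ≤ B) (hkv : k ≤ v) (hvB : v ≤ B) :
    (∑ h ∈ Finset.range (B + 1), psi B h k v) = ((B : ℝ) + 1) / ((B : ℝ) - k + 1) ∧
    (v ≤ B - 1 →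
      (∑ h ∈ Finset.range B, psi B h k v) = ((B : ℝ) + 1) / ((B : ℝ) - k + 1)) ∧
    (v = B →
      (∑ h ∈ Finset.range B, psi B h k B) = (k : ℝ) / ((B : ℝ) - k + 1)) := by
  have hfull := sum_range_psi hkv hvB
  rw [sum_range_succ, psi_eq_choose_mul_choose_div le_rfl hkv hvB, Nat.sub_self] at hfull
  refine ⟨sum_range_psi hkv hvB, fun hv => ?_, fun hv => ?_⟩
  · rwa [Nat.choose_eq_zero_of_lt (show 0 < B - v by omega), mul_zero, Nat.cast_zero, zero_div,
      add_zero] at hfull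
  · subst hv
    have hBk : (v : ℝ) - k + 1 ≠ 0 := by
      have : (k : ℝ) ≤ v := by exact_mod_cast hkv
      linarith
    rw [Nat.sub_self, Nat.choose_zero_right, mul_one, Nat.choose_symm hkv,
      div_self (by exact_mod_cast (Nat.choose_pos hkv).ne'), ← eq_sub_iff_add_eq] at hfull
    rw [hfull]
    field_simp
    ring
end

section
/- Fix an integer B ≥ 1. For every n ≥ 1 and every 0 ≤ v ≤ B, the probability that exactly v blocks are collectively held by n independent peers in the γ = μ model is given in closed form by p_n(v;μ) = C(B,v) · ∑_{l=0}^{v} C(v,l) (−1)^l (B−v+l+1)^{−n}. -/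
/-- Single-peer block-ownership distribution in the `γ = μ` model: each subset `s`
of `{1, …, B}` has probability `1/((B+1) C(B,|s|))` (a uniform size in `{0, …, B}`,
then a uniform subset of that size). -/
noncomputable def wnu (B : ℕ) (s : Finset (Fin B)) : ℝ :=
  1 / ((B + 1) * (B.choose s.card))

/-- `pnu B n v` : probability that exactly `v` blocks are collectively held by `n`
independent peers, each with block set drawn from `wnu B`. -/
noncomputable def pnu (B n v : ℕ) : ℝ :=
  ∑ f : Fin n → Finset (Fin B),
    if (Finset.univ.biUnion f).card = v then ∏ u, wnu B (f u) else 0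

/-!
Under `ν_B`, a peer's block set lies inside a fixed `U` with probability
`∑_{k ≤ |U|} C(|U|,k) / ((B+1) C(B,k)) = 1 / (B + 1 - |U|)` (a telescoping sum), so by independence
the union of `n` peers lies inside `U` with probability `(B + 1 - |U|)^{-n}`. Inclusion–exclusion over
the subsets of a `v`-set `T` turns these into the probability that the union is exactly `T`, which
depends only on `v`; summing over the `C(B,v)` choices of `T` gives the formula.
-/

open Finset

theorem Finset.sum_powerset_filter_subset_sdiff_neg_one_pow {α R : Type*} [DecidableEq α] [Ring R]
    (W T : Finset α) :
    ∑ V ∈ T.powerset with W ⊆ T \ V, (-1 : R) ^ #V = if W = T then 1 else 0 := by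
  by_cases hWT : W ⊆ T
  · have hfilter : {V ∈ T.powerset | W ⊆ T \ V} = (T \ W).powerset := by
      ext V
      simp only [mem_filter, mem_powerset, subset_sdiff]
      constructor
      · rintro ⟨hVT, -, hWV⟩
        exact ⟨hVT, hWV.symm⟩
      · rintro ⟨hVT, hVW⟩
        exact ⟨hVT, hWT, hVW.symm⟩
    have h := congrArg (Int.cast : ℤ → R) (sum_powerset_neg_one_pow_card (x := T \ W))
    push_cast at h
    rw [hfilter, h]
    have hiff : T \ W = ∅ ↔ W = T := by
      rw [sdiff_eq_empty_iff_subset, Subset.antisymm_iff, and_iff_right hWT]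
    exact if_congr hiff rfl rfl
  · rw [if_neg (fun h => hWT h.subset), sum_eq_zero]
    intro V hV
    exact absurd ((mem_filter.mp hV).2.trans sdiff_subset) hWT

section UnionOfRandomSubsets

variable {α ι R : Type*} [DecidableEq α] [Fintype α] [DecidableEq ι] [Fintype ι]

theorem Finset.sum_pi_biUnion_subset [CommSemiring R] (w : Finset α → R) (U : Finset α) :
    ∑ f : ι → Finset α, (if univ.biUnion f ⊆ U then ∏ i, w (f i) else 0) =
      (∑ s ∈ U.powerset, w s) ^ Fintype.card ι := by
  rw [← sum_filter, ← card_univ, ← prod_const, prod_univ_sum]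
  congr 1
  ext f
  simp

theorem Finset.sum_pi_biUnion_eq [CommRing R] (w : Finset α → R) (T : Finset α) :
    ∑ f : ι → Finset α, (if univ.biUnion f = T then ∏ i, w (f i) else 0) =
      ∑ V ∈ T.powerset, (-1) ^ #V * (∑ s ∈ (T \ V).powerset, w s) ^ Fintype.card ι := by
  calc ∑ f : ι → Finset α, (if univ.biUnion f = T then ∏ i, w (f i) else 0)
      = ∑ f : ι → Finset α, ∑ V ∈ T.powerset,
          (-1) ^ #V * if univ.biUnion f ⊆ T \ V then ∏ i, w (f i) else 0 := by
        refine sum_congr rfl fun f _ => ?_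
        simp only [mul_ite, mul_zero, ← sum_filter, ← sum_mul,
          sum_powerset_filter_subset_sdiff_neg_one_pow, ite_mul, one_mul, zero_mul]
    _ = _ := by
        rw [sum_comm]
        simp only [← mul_sum, sum_pi_biUnion_subset]

end UnionOfRandomSubsets

theorem Nat.choose_div_choose_succ_mul {t B k : ℕ} (hk : k ≤ t) (ht : t ≤ B) :
    (t.choose (k + 1) / B.choose (k + 1) : ℝ) * (B - k) =
      t.choose k / B.choose k * (t - k) := by
  rcases hk.lt_or_eq with hkt | rfl
  · have hBk : (B - k : ℝ) ≠ 0 := sub_ne_zero.mpr (by exact_mod_cast (by omega : B ≠ k))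
    have choose_succ : ∀ m, k ≤ m → (m.choose (k + 1) : ℝ) = m.choose k * (m - k) / (k + 1) := by
      intro m hm
      rw [eq_div_iff (by positivity), ← Nat.cast_sub hm]
      exact_mod_cast Nat.choose_succ_right_eq m k
    rw [choose_succ t hk, choose_succ B (hk.trans ht)]
    field_simp
  · simp

theorem Nat.sum_range_choose_div_choose {t B : ℕ} (ht : t ≤ B) :
    ∑ k ∈ range (t + 1), (t.choose k / B.choose k : ℝ) = (B + 1) / (B + 1 - t) := by
  have htB : (t : ℝ) ≤ B := by exact_mod_cast ht
  set a : ℕ → ℝ := fun k => t.choose k / B.choose k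
  have hstep : ∀ k ∈ range (t + 1),
      a k * (B + 1 - t) = (B + 1 - k) * a k - (B + 1 - (k + 1 : ℕ)) * a (k + 1) := by
    intro k hk
    have := Nat.choose_div_choose_succ_mul (Nat.lt_succ_iff.mp (mem_range.mp hk)) ht
    push_cast
    simp only [a] at this ⊢
    linear_combination this
  rw [eq_div_iff (by linarith), sum_mul, sum_congr rfl hstep, sum_range_sub']
  simp [a]

theorem sum_powerset_wnu (B : ℕ) (T : Finset (Fin B)) :
    ∑ s ∈ T.powerset, wnu B s = 1 / (B + 1 - #T) := by
  have hT : #T ≤ B := by simpa using card_le_univ T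
  simp only [wnu]
  rw [sum_powerset_apply_card (fun k => 1 / ((B + 1) * (B.choose k : ℝ)))]
  calc ∑ k ∈ range (#T + 1), (#T).choose k • (1 / ((B + 1) * (B.choose k : ℝ)))
      = (∑ k ∈ range (#T + 1), ((#T).choose k / B.choose k : ℝ)) / (B + 1) := by
        rw [sum_div]
        refine sum_congr rfl fun k _ => ?_
        rw [nsmul_eq_mul]
        field_simp
    _ = 1 / (B + 1 - #T) := by
        rw [Nat.sum_range_choose_div_choose hT]
        field_simp

theorem pnu_eq_sum_powersetCard (B n v : ℕ) :
    pnu B n v = ∑ T ∈ powersetCard v univ, ∑ f : Fin n → Finset (Fin B),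
      if univ.biUnion f = T then ∏ u, wnu B (f u) else 0 := by
  rw [pnu, sum_comm]
  refine sum_congr rfl fun f _ => ?_
  rw [sum_ite_eq]
  simp only [mem_powersetCard_univ]

theorem sum_pi_biUnion_eq_wnu (B n : ℕ) (T : Finset (Fin B)) :
    ∑ f : Fin n → Finset (Fin B), (if univ.biUnion f = T then ∏ u, wnu B (f u) else 0) =
      ∑ l ∈ range (#T + 1), ((#T).choose l : ℝ) * (-1) ^ l / (B - #T + l + 1) ^ n := by
  rw [sum_pi_biUnion_eq, Fintype.card_fin]
  calc ∑ V ∈ T.powerset, (-1) ^ #V * (∑ s ∈ (T \ V).powerset, wnu B s) ^ n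
      = ∑ V ∈ T.powerset, (-1 : ℝ) ^ #V / (B - #T + #V + 1) ^ n := by
        refine sum_congr rfl fun V hV => ?_
        rw [sum_powerset_wnu, card_sdiff_of_subset (mem_powerset.mp hV),
          Nat.cast_sub (card_le_card (mem_powerset.mp hV)), div_pow, one_pow, mul_one_div]
        congr 2
        ring
    _ = _ := by
        rw [sum_powerset_apply_card (fun l => (-1 : ℝ) ^ l / (B - #T + l + 1) ^ n)]
        simp only [nsmul_eq_mul, mul_div_assoc]

theorem stmt5_general (B n v : ℕ) :
    pnu B n v = (B.choose v : ℝ) *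
      ∑ l ∈ Finset.range (v + 1),
        (v.choose l : ℝ) * (-1 : ℝ) ^ l / ((B : ℝ) - v + l + 1) ^ n := by
  rw [pnu_eq_sum_powersetCard,
    sum_congr rfl fun T hT => by rw [sum_pi_biUnion_eq_wnu, mem_powersetCard_univ.mp hT],
    sum_const, card_powersetCard, card_univ, Fintype.card_fin, nsmul_eq_mul]

/-- for `B ≥ 1`, `n ≥ 1` and `0 ≤ v ≤ B`, in the `γ = μ` model,
`p_n(v;μ) = C(B,v) ∑_{l=0}^{v} C(v,l) (-1)^l (B-v+l+1)^{-n}`. -/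
theorem stmt5 (B n v : ℕ) (hB : 1 ≤ B) (hn : 1 ≤ n) (hv : v ≤ B) :
    pnu B n v = (B.choose v : ℝ) *
      ∑ l ∈ Finset.range (v + 1),
        (v.choose l : ℝ) * (-1 : ℝ) ^ l / ((B : ℝ) - v + l + 1) ^ n :=
  stmt5_general B n v
end

section
/- Fix an integer B ≥ 1 and define, for n ≥ 0 and 0 ≤ v ≤ B, the real number d_n(v) = C(B,v) · ∑_{l=0}^{v} C(v,l) (−1)^l (B−v+l+1)^{−n}. Then for every n ≥ 1 and every 1 ≤ v ≤ B, d_n(v) − d_{n−1}(v)/(B−v+1) = d_n(v−1). -/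
/-- The closed-form expression `d_n(v) = C(B,v) ∑_{l=0}^{v} C(v,l) (-1)^l (B-v+l+1)^{-n}`. -/
noncomputable def dform (B n v : ℕ) : ℝ :=
  (B.choose v : ℝ) * ∑ l ∈ Finset.range (v + 1),
    (v.choose l : ℝ) * (-1 : ℝ) ^ l / ((B : ℝ) - v + l + 1) ^ n

/-!
Write `d_n(v) = C(B,v) S_n(v, B-v+1)` with `S_n(v, x) = ∑_l C(v,l) (-1)^l (x+l)^{-n}`.
Since `(x+l)^{-n} - (x+l)^{-(n-1)}/x = -l (x+l)^{-n}/x`, the left-hand side only sees the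
weighted sum `∑_l l C(v,l) (-1)^l (x+l)^{-n}`, and `l C(v,l) = v C(v-1,l-1)` turns it into
`-v S_n(v-1, x+1)`. The prefactors match because `v C(B,v) = (B-v+1) C(B,v-1)`.
-/

open Finset

noncomputable def altInvPowSum (n v : ℕ) (x : ℝ) : ℝ :=
  ∑ l ∈ range (v + 1), (v.choose l : ℝ) * (-1) ^ l / (x + l) ^ n

theorem dform_eq_choose_mul_altInvPowSum (B n v : ℕ) :
    dform B n v = B.choose v * altInvPowSum n v ((B : ℝ) - v + 1) := by
  unfold dform altInvPowSum
  congr 1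
  refine sum_congr rfl fun l _ => ?_
  ring_nf

theorem altInvPowSum_succ_sub_div {x : ℝ} (hx : 0 < x) (n v : ℕ) :
    altInvPowSum (n + 1) v x - altInvPowSum n v x / x =
      -(∑ l ∈ range (v + 1), (l : ℝ) * (v.choose l) * (-1) ^ l / (x + l) ^ (n + 1)) / x := by
  unfold altInvPowSum
  rw [sum_div, ← sum_sub_distrib, ← sum_neg_distrib, sum_div]
  refine sum_congr rfl fun l _ => ?_
  have hxl : x + l ≠ 0 := by positivity
  field_simp
  ring

theorem sum_mul_choose_succ_eq_neg_mul_altInvPowSum (m w : ℕ) (x : ℝ) :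
    ∑ l ∈ range (w + 2), (l : ℝ) * ((w + 1).choose l) * (-1) ^ l / (x + l) ^ m =
      -((w + 1) * altInvPowSum m w (x + 1)) := by
  rw [sum_range_succ', altInvPowSum, mul_sum, ← sum_neg_distrib]
  simp only [CharP.cast_eq_zero, zero_mul, zero_div, add_zero]
  refine sum_congr rfl fun l _ => ?_
  have hchoose : ((w + 1 : ℕ) : ℝ) * (w.choose l) = ((w + 1).choose (l + 1)) * (l + 1) := by
    exact_mod_cast Nat.add_one_mul_choose_eq w l
  push_cast at hchoose ⊢
  rw [show x + (l + 1) = x + 1 + l by ring]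
  linear_combination (-1) ^ l / (x + 1 + l) ^ m * hchoose

theorem stmt8_general (B n v : ℕ) (hn : 1 ≤ n) (hv1 : 1 ≤ v) (hvB : v ≤ B) :
    dform B n v - dform B (n - 1) v / ((B : ℝ) - v + 1) = dform B n (v - 1) := by
  obtain ⟨w, rfl⟩ : ∃ w, v = w + 1 := ⟨v - 1, by omega⟩
  obtain ⟨k, rfl⟩ : ∃ k, n = k + 1 := ⟨n - 1, by omega⟩
  set x : ℝ := (B : ℝ) - (w + 1 : ℕ) + 1 with hx_def
  have hx : 0 < x := by
    have : ((w + 1 : ℕ) : ℝ) ≤ B := by exact_mod_cast hvB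
    linarith
  have hchoose : (B.choose (w + 1) : ℝ) * (w + 1) = B.choose w * x := by
    have := congrArg (Nat.cast : ℕ → ℝ) (Nat.choose_succ_right_eq B w)
    push_cast [hx_def, Nat.cast_sub (by omega : w ≤ B)] at this ⊢
    linear_combination this
  have hshift : (B : ℝ) - w + 1 = x + 1 := by rw [hx_def]; push_cast; ring
  simp only [Nat.add_sub_cancel, dform_eq_choose_mul_altInvPowSum, hshift, ← hx_def]
  rw [mul_div_assoc, ← mul_sub, altInvPowSum_succ_sub_div hx,
    sum_mul_choose_succ_eq_neg_mul_altInvPowSum]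
  field_simp
  linear_combination altInvPowSum (k + 1) w (x + 1) * hchoose

/-- for `B ≥ 1`, `n ≥ 1` and `1 ≤ v ≤ B`,
`d_n(v) - d_{n-1}(v)/(B-v+1) = d_n(v-1)`. -/
theorem stmt8 (B n v : ℕ) (hB : 1 ≤ B) (hn : 1 ≤ n) (hv1 : 1 ≤ v) (hvB : v ≤ B) :
    dform B n v - dform B (n - 1) v / ((B : ℝ) - v + 1) = dform B n (v - 1) :=
  stmt8_general B n v hn hv1 hvB
end

section
/- For every integer B ≥ 1 and every real number x ≥ 0, ∑_{n=0}^{∞} (e^{−x} x^n / n!) · ( ∑_{l=0}^{B} C(B,l) (−1)^l (l+1)^{−n} ) = ∑_{l=0}^{B} C(B,l) (−1)^l e^{−x·l/(l+1)}; the series on the left converges absolutely. -/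
/-!
Multiplying out the inner sum, the series becomes a finite sum over `l` of Poisson mixtures of
the geometric weights `(l + 1)⁻ⁿ`; each of these is an exponential series evaluated at
`x / (l + 1)`, so it sums to `e^{-x} e^{x/(l+1)} = e^{-x l/(l+1)}`. Absolute convergence
follows from the bound `2^B` on the inner sums.
-/

open Finset

lemma Real.hasSum_pow_div_factorial (y : ℝ) :
    HasSum (fun n : ℕ => y ^ n / n.factorial) (Real.exp y) := by
  rw [Real.exp_eq_exp_ℝ]
  exact NormedSpace.expSeries_div_hasSum_exp y

lemma hasSum_poisson_mul_div_pow (x a c : ℝ) :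
    HasSum (fun n : ℕ => Real.exp (-x) * x ^ n / n.factorial * (c / a ^ n))
      (c * Real.exp (-x) * Real.exp (x / a)) := by
  have h : (fun n : ℕ => Real.exp (-x) * x ^ n / n.factorial * (c / a ^ n)) =
      fun n : ℕ => c * Real.exp (-x) * ((x / a) ^ n / n.factorial) := by
    funext n
    rw [div_pow, div_eq_mul_inv c]
    ring
  rw [h]
  exact (Real.hasSum_pow_div_factorial (x / a)).mul_left _

lemma abs_sum_choose_mul_neg_one_pow_div_pow_le (B n : ℕ) :
    |∑ l ∈ range (B + 1), (B.choose l : ℝ) * (-1 : ℝ) ^ l / ((l : ℝ) + 1) ^ n| ≤ 2 ^ B := by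
  calc |∑ l ∈ range (B + 1), (B.choose l : ℝ) * (-1 : ℝ) ^ l / ((l : ℝ) + 1) ^ n|
      ≤ ∑ l ∈ range (B + 1), |(B.choose l : ℝ) * (-1 : ℝ) ^ l / ((l : ℝ) + 1) ^ n| :=
        abs_sum_le_sum_abs _ _
    _ ≤ ∑ l ∈ range (B + 1), (B.choose l : ℝ) := by
        gcongr with l
        rw [abs_div, abs_mul, abs_neg_one_pow, mul_one, Nat.abs_cast,
          abs_of_pos (by positivity)]
        exact div_le_self (by positivity) (one_le_pow₀ (by simp))
    _ = 2 ^ B := by exact_mod_cast Nat.sum_range_choose B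

theorem stmt9_general (B : ℕ) (x : ℝ) :
    Summable (fun n : ℕ => |Real.exp (-x) * x ^ n / n.factorial *
        ∑ l ∈ Finset.range (B + 1),
          (B.choose l : ℝ) * (-1 : ℝ) ^ l / ((l : ℝ) + 1) ^ n|) ∧
    (∑' n : ℕ, Real.exp (-x) * x ^ n / n.factorial *
        ∑ l ∈ Finset.range (B + 1),
          (B.choose l : ℝ) * (-1 : ℝ) ^ l / ((l : ℝ) + 1) ^ n)
      = ∑ l ∈ Finset.range (B + 1),
          (B.choose l : ℝ) * (-1 : ℝ) ^ l * Real.exp (-x * l / ((l : ℝ) + 1)) := by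
  constructor
  · refine .abs <| .of_norm_bounded
      ((Real.summable_pow_div_factorial |x|).mul_left (Real.exp (-x) * 2 ^ B)) fun n => ?_
    rw [Real.norm_eq_abs, abs_mul, abs_div, abs_mul, abs_pow, Nat.abs_cast,
      abs_of_pos (Real.exp_pos _), mul_div_assoc, mul_right_comm, mul_assoc,
      mul_assoc (Real.exp (-x))]
    gcongr
    exact abs_sum_choose_mul_neg_one_pow_div_pow_le B n
  · simp_rw [mul_sum]
    refine (hasSum_sum fun l _ => hasSum_poisson_mul_div_pow x _ _).tsum_eq.trans ?_
    refine sum_congr rfl fun l _ => ?_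
    rw [mul_assoc, ← Real.exp_add]
    congr 2
    field_simp
    ring

/-- for every integer `B ≥ 1` and every real `x ≥ 0`, the series
`∑_{n=0}^{∞} (e^{-x} x^n / n!) ∑_{l=0}^{B} C(B,l) (-1)^l (l+1)^{-n}` converges
absolutely and equals `∑_{l=0}^{B} C(B,l) (-1)^l e^{-x l/(l+1)}`. -/
theorem stmt9 (B : ℕ) (hB : 1 ≤ B) (x : ℝ) (hx : 0 ≤ x) :
    Summable (fun n : ℕ => |Real.exp (-x) * x ^ n / n.factorial *
        ∑ l ∈ Finset.range (B + 1),
          (B.choose l : ℝ) * (-1 : ℝ) ^ l / ((l : ℝ) + 1) ^ n|) ∧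
    (∑' n : ℕ, Real.exp (-x) * x ^ n / n.factorial *
        ∑ l ∈ Finset.range (B + 1),
          (B.choose l : ℝ) * (-1 : ℝ) ^ l / ((l : ℝ) + 1) ^ n)
      = ∑ l ∈ Finset.range (B + 1),
          (B.choose l : ℝ) * (-1 : ℝ) ^ l * Real.exp (-x * l / ((l : ℝ) + 1)) :=
  stmt9_general B x
end

section
/- Fix an integer B ≥ 1, an integer 1 ≤ l ≤ B, and a real ρ ≥ 0. Let L be a subset of {1,…,B} with |L| = l. Then the Poisson mixture ∑_{n=0}^{∞} e^{−(B+1)ρ} ((B+1)ρ)^n / n! · P(L ∩ (S_1 ∪ ⋯ ∪ S_n) = ∅), where S_1,…,S_n are independent draws from ν_B, equals exp(−ρ·l·(B+1)/(l+1)). That is, the steady-state probability that l tagged blocks are simultaneously unavailable among the peers is exp(−ρ(B+1)l/(l+1)). -/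
open Finset

namespace Nat

/-- Both sides equal `C(n, k + j) C(k + j, k)`. -/
theorem choose_sub_mul_choose_eq (n k j : ℕ) :
    (n - k).choose j * n.choose k = n.choose j * (n - j).choose k := by
  have hk := choose_mul (n := n) (k := k + j) (le_add_right k j)
  have hj := choose_mul (n := n) (k := k + j) (le_add_left j k)
  rw [Nat.add_sub_cancel_left, choose_symm_add] at hk
  rw [Nat.add_sub_cancel] at hj
  rw [mul_comm, ← hk, hj]

theorem sum_range_choose_sub (n k : ℕ) (hkn : k ≤ n) :
    ∑ j ∈ range (n - k + 1), (n - j).choose k = (n + 1).choose (k + 1) := by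
  rw [← sum_range_reflect]
  have hreflect : ∀ j ∈ range (n - k + 1),
      (n - (n - k + 1 - 1 - j)).choose k = (j + k).choose k := by
    intro j hj
    rw [mem_range] at hj
    congr 1
    omega
  rw [sum_congr rfl hreflect, sum_range_add_choose, Nat.sub_add_cancel hkn]

end Nat

theorem sum_choose_div_choose (n k : ℕ) (hkn : k ≤ n) :
    ∑ j ∈ range (n - k + 1), ((n - k).choose j : ℝ) * (1 / ((n + 1) * n.choose j))
      = 1 / (k + 1) := by
  have hnk : (0 : ℝ) < n.choose k := by exact_mod_cast Nat.choose_pos hkn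
  have hterm : ∀ j ∈ range (n - k + 1), ((n - k).choose j : ℝ) * (1 / ((n + 1) * n.choose j))
      = (n - j).choose k / ((n + 1) * n.choose k) := by
    intro j hj
    have hnj : (0 : ℝ) < n.choose j := by
      exact_mod_cast Nat.choose_pos (by rw [mem_range] at hj; omega)
    have hswap : ((n - k).choose j : ℝ) * n.choose k = n.choose j * (n - j).choose k := by
      exact_mod_cast Nat.choose_sub_mul_choose_eq n k j
    field_simp
    linear_combination hswap
  have hsum : ∑ j ∈ range (n - k + 1), ((n - j).choose k : ℝ) = (n + 1).choose (k + 1) := by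
    exact_mod_cast Nat.sum_range_choose_sub n k hkn
  have hpascal : ((n : ℝ) + 1) * n.choose k = (n + 1).choose (k + 1) * (k + 1) := by
    exact_mod_cast Nat.add_one_mul_choose_eq n k
  have hpos : (0 : ℝ) < (n + 1).choose (k + 1) := by
    exact_mod_cast Nat.choose_pos (by omega : k + 1 ≤ n + 1)
  rw [sum_congr rfl hterm, ← sum_div, hsum, hpascal]
  field_simp

theorem sum_wnu_of_inter_eq_empty (B : ℕ) (L : Finset (Fin B)) :
    (∑ s : Finset (Fin B), if L ∩ s = ∅ then wnu B s else 0) = 1 / (L.card + 1) := by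
  have hdisjoint : univ.filter (fun s : Finset (Fin B) => L ∩ s = ∅) = Lᶜ.powerset := by
    ext s
    simp [← disjoint_iff_inter_eq_empty, subset_compl_iff_disjoint_left]
  have hcard : Lᶜ.card = B - L.card := by rw [card_compl, Fintype.card_fin]
  calc (∑ s : Finset (Fin B), if L ∩ s = ∅ then wnu B s else 0)
      = ∑ s ∈ Lᶜ.powerset, wnu B s := by rw [← sum_filter, hdisjoint]
    _ = ∑ j ∈ range (Lᶜ.card + 1), Lᶜ.card.choose j • (1 / ((B + 1 : ℝ) * B.choose j)) :=
      sum_powerset_apply_card (fun j => 1 / ((B + 1 : ℝ) * B.choose j))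
    _ = 1 / (L.card + 1) := by
      rw [hcard]
      simp only [nsmul_eq_mul]
      exact sum_choose_div_choose B L.card (by simpa using L.card_le_univ)

theorem sum_pi_ite_inter_biUnion_eq_empty {α R : Type*} [DecidableEq α] [Fintype α]
    [CommSemiring R] (n : ℕ) (L : Finset α) (w : Finset α → R) :
    (∑ f : Fin n → Finset α, if L ∩ univ.biUnion f = ∅ then ∏ u, w (f u) else 0)
      = (∑ s : Finset α, if L ∩ s = ∅ then w s else 0) ^ n := by
  have hfactor : ∀ f : Fin n → Finset α,
      (if L ∩ univ.biUnion f = ∅ then ∏ u, w (f u) else 0)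
        = ∏ u, if L ∩ f u = ∅ then w (f u) else 0 := by
    intro f
    simp [prod_ite_zero, inter_biUnion, ← subset_empty]
  rw [sum_congr rfl fun f _ => hfactor f, ← Fin.prod_const, Fintype.prod_sum]

theorem tsum_poisson_mul_pow (m p : ℝ) :
    ∑' n : ℕ, Real.exp (-m) * m ^ n / n.factorial * p ^ n = Real.exp (-(m * (1 - p))) := by
  have hterm : ∀ n : ℕ, Real.exp (-m) * m ^ n / n.factorial * p ^ n
      = Real.exp (-m) * ((m * p) ^ n / n.factorial) := by
    intro n
    ring
  rw [tsum_congr hterm, tsum_mul_left, ← congrFun NormedSpace.exp_eq_tsum_div, ← Real.exp_eq_exp_ℝ,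
    ← Real.exp_add]
  ring_nf

theorem stmt12_general (B l : ℕ) (ρ : ℝ) (L : Finset (Fin B)) (hL : L.card = l) :
    (∑' n : ℕ, Real.exp (-(((B : ℝ) + 1) * ρ)) * (((B : ℝ) + 1) * ρ) ^ n / n.factorial *
        (∑ f : Fin n → Finset (Fin B),
          if L ∩ Finset.univ.biUnion f = ∅ then ∏ u, wnu B (f u) else 0))
      = Real.exp (-(ρ * l * ((B : ℝ) + 1) / ((l : ℝ) + 1))) := by
  simp only [sum_pi_ite_inter_biUnion_eq_empty, sum_wnu_of_inter_eq_empty, hL]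
  rw [tsum_poisson_mul_pow]
  congr 1
  field_simp
  ring

/-- for `B ≥ 1`, `1 ≤ l ≤ B`, `ρ ≥ 0` and a subset `L` of the blocks
with `|L| = l`, the Poisson mixture (with mean `(B+1)ρ`) of the probability that
the `l` tagged blocks `L` are unavailable among `n` independent peers equals
`exp(-ρ l (B+1)/(l+1))`. -/
theorem stmt12 (B l : ℕ) (hB : 1 ≤ B) (hl1 : 1 ≤ l) (hlB : l ≤ B)
    (ρ : ℝ) (hρ : 0 ≤ ρ) (L : Finset (Fin B)) (hL : L.card = l) :
    (∑' n : ℕ, Real.exp (-(((B : ℝ) + 1) * ρ)) * (((B : ℝ) + 1) * ρ) ^ n / n.factorial *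
        (∑ f : Fin n → Finset (Fin B),
          if L ∩ Finset.univ.biUnion f = ∅ then ∏ u, wnu B (f u) else 0))
      = Real.exp (-(ρ * l * ((B : ℝ) + 1) / ((l : ℝ) + 1))) :=
  stmt12_general B l ρ L hL
end

section
/- Fix an integer B ≥ 1 and a real ρ ≥ 0. If S_1,…,S_n are independent draws from ν_B and V_n = |S_1 ∪ ⋯ ∪ S_n|, then E[B − V_n] = B·2^{−n} for every n ≥ 0, and consequently the Poisson mixture ∑_{n=0}^{∞} e^{−(B+1)ρ} ((B+1)ρ)^n / n! · E[B − V_n] equals B·exp(−ρ(B+1)/2). That is, the steady-state mean number of blocks available among the peers is E[V] = B(1 − exp(−ρ(B+1)/2)). -/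
open Finset

section Coverage

variable {α R : Type*} [DecidableEq α] [CommRing R]

theorem ite_notMem_biUnion_eq_prod {ι : Type*} [Fintype ι] (f : ι → Finset α) (i : α) :
    (if i ∉ univ.biUnion f then (1 : R) else 0) = ∏ u, if i ∉ f u then 1 else 0 := by
  rw [Fintype.prod_boole]
  simp

variable [Fintype α]

theorem card_sub_card_eq_sum_ite_notMem (t : Finset α) :
    (Fintype.card α : R) - #t = ∑ i, if i ∉ t then 1 else 0 := by
  rw [sum_boole, filter_not, filter_mem_eq_inter, univ_inter, ← compl_eq_univ_sdiff,
    card_compl, Nat.cast_sub (card_le_univ t)]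

theorem sum_prod_mul_card_sub_card_biUnion (w : Finset α → R) (n : ℕ) :
    ∑ f : Fin n → Finset α, (∏ u, w (f u)) * ((Fintype.card α : R) - #(univ.biUnion f))
      = ∑ i, (∑ s, if i ∉ s then w s else 0) ^ n := by
  calc _ = ∑ f : Fin n → Finset α, ∑ i, ∏ u, (if i ∉ f u then w (f u) else 0) := by
        refine sum_congr rfl fun f _ => ?_
        rw [card_sub_card_eq_sum_ite_notMem, mul_sum]
        refine sum_congr rfl fun i _ => ?_
        rw [ite_notMem_biUnion_eq_prod, ← prod_mul_distrib]
        simp only [mul_boole]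
    _ = ∑ i, ∑ f : Fin n → Finset α, ∏ u, (if i ∉ f u then w (f u) else 0) := sum_comm
    _ = _ := by simp only [Fintype.sum_pow]

theorem two_mul_sum_ite_notMem_of_compl (w : Finset α → R) (hw : ∀ s, w sᶜ = w s) (i : α) :
    2 * ∑ s, (if i ∉ s then w s else 0) = ∑ s, w s := by
  have hswap : ∑ s, (if i ∉ s then w s else 0) = ∑ s, (if i ∈ s then w s else 0) := by
    rw [← compl_involutive.bijective.sum_comp]
    simp only [mem_compl, hw, not_not]
  rw [two_mul]
  nth_rewrite 2 [hswap]
  rw [← sum_add_distrib]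
  refine sum_congr rfl fun s _ => ?_
  split_ifs <;> simp_all

end Coverage

theorem sum_wnu (B : ℕ) : ∑ s : Finset (Fin B), wnu B s = 1 := by
  rw [← powerset_univ]
  unfold wnu
  rw [sum_powerset_apply_card (fun k => 1 / ((B + 1) * (B.choose k) : ℝ)),
    card_univ, Fintype.card_fin]
  have hterm : ∀ k ∈ range (B + 1),
      B.choose k • (1 / ((B + 1) * (B.choose k) : ℝ)) = 1 / (B + 1) := by
    intro k hk
    have hchoose : (B.choose k : ℝ) ≠ 0 := by
      exact_mod_cast (Nat.choose_pos (Nat.lt_succ_iff.mp (mem_range.mp hk))).ne'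
    rw [nsmul_eq_mul]
    field_simp
  rw [sum_congr rfl hterm, sum_const, card_range, nsmul_eq_mul]
  push_cast
  field_simp

theorem wnu_compl (B : ℕ) (s : Finset (Fin B)) : wnu B sᶜ = wnu B s := by
  rw [wnu, wnu, card_compl, Fintype.card_fin, Nat.choose_symm (by simpa using card_le_univ s)]

theorem sum_ite_notMem_wnu (B : ℕ) (i : Fin B) :
    ∑ s, (if i ∉ s then wnu B s else 0) = 2⁻¹ := by
  have h := two_mul_sum_ite_notMem_of_compl (wnu B) (wnu_compl B) i
  rw [sum_wnu] at h
  linarith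

theorem sum_prod_wnu_mul_sub_card_biUnion (B n : ℕ) :
    ∑ f : Fin n → Finset (Fin B), (∏ u, wnu B (f u)) * ((B : ℝ) - #(univ.biUnion f))
      = B / 2 ^ n := by
  have h := sum_prod_mul_card_sub_card_biUnion (wnu B) n
  rw [Fintype.card_fin] at h
  simp only [h, sum_ite_notMem_wnu, sum_const, card_univ, Fintype.card_fin, nsmul_eq_mul,
    inv_pow, div_eq_mul_inv]

theorem sum_prod_wnu_mul_card_biUnion (B n : ℕ) :
    ∑ f : Fin n → Finset (Fin B), (∏ u, wnu B (f u)) * (#(univ.biUnion f) : ℝ)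
      = B - B / 2 ^ n := by
  have htotal : ∑ f : Fin n → Finset (Fin B), ∏ u, wnu B (f u) = 1 := by
    rw [← Fintype.sum_pow, sum_wnu, one_pow]
  calc _ = ∑ f : Fin n → Finset (Fin B), ((∏ u, wnu B (f u)) * B
          - (∏ u, wnu B (f u)) * ((B : ℝ) - #(univ.biUnion f))) :=
        sum_congr rfl fun f _ => by ring
    _ = B - B / 2 ^ n := by
        rw [sum_sub_distrib, ← sum_mul, htotal, one_mul, sum_prod_wnu_mul_sub_card_biUnion]

theorem hasSum_poisson_mul_pow (c x : ℝ) :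
    HasSum (fun n : ℕ => Real.exp (-c) * c ^ n / n.factorial * x ^ n)
      (Real.exp (c * (x - 1))) := by
  have h := (NormedSpace.expSeries_div_hasSum_exp (c * x)).mul_left (Real.exp (-c))
  rw [← Real.exp_eq_exp_ℝ, ← Real.exp_add, show -c + c * x = c * (x - 1) by ring] at h
  exact h.congr_fun fun n => by ring

theorem stmt14_general (B : ℕ) (ρ : ℝ) :
    (∀ n : ℕ,
      (∑ f : Fin n → Finset (Fin B),
        (∏ u, wnu B (f u)) * ((B : ℝ) - (Finset.univ.biUnion f).card))
        = (B : ℝ) / 2 ^ n) ∧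
    (∑' n : ℕ, Real.exp (-(((B : ℝ) + 1) * ρ)) * (((B : ℝ) + 1) * ρ) ^ n / n.factorial *
        ((B : ℝ) / 2 ^ n))
      = (B : ℝ) * Real.exp (-(ρ * ((B : ℝ) + 1) / 2)) ∧
    (∑' n : ℕ, Real.exp (-(((B : ℝ) + 1) * ρ)) * (((B : ℝ) + 1) * ρ) ^ n / n.factorial *
        (∑ f : Fin n → Finset (Fin B),
          (∏ u, wnu B (f u)) * ((Finset.univ.biUnion f).card : ℝ)))
      = (B : ℝ) * (1 - Real.exp (-(ρ * ((B : ℝ) + 1) / 2))) := by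
  set c : ℝ := ((B : ℝ) + 1) * ρ
  have hmix : HasSum (fun n : ℕ => Real.exp (-c) * c ^ n / n.factorial * ((B : ℝ) / 2 ^ n))
      (B * Real.exp (-(ρ * ((B : ℝ) + 1) / 2))) := by
    have h := (hasSum_poisson_mul_pow c 2⁻¹).mul_left (B : ℝ)
    rw [show c * (2⁻¹ - 1) = -(ρ * ((B : ℝ) + 1) / 2) by ring] at h
    exact h.congr_fun fun n => by rw [inv_pow]; ring
  have htotal : HasSum (fun n : ℕ => Real.exp (-c) * c ^ n / n.factorial * (B : ℝ)) B := by
    have h := (hasSum_poisson_mul_pow c 1).mul_left (B : ℝ)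
    rw [sub_self, mul_zero, Real.exp_zero, mul_one] at h
    exact h.congr_fun fun n => by ring
  refine ⟨sum_prod_wnu_mul_sub_card_biUnion B, hmix.tsum_eq, ?_⟩
  simp only [sum_prod_wnu_mul_card_biUnion, mul_sub]
  rw [(htotal.sub hmix).tsum_eq]
  ring

/-- for `B ≥ 1` and `ρ ≥ 0`: with `Vₙ = |S₁ ∪ ⋯ ∪ Sₙ|` the number of
blocks held by `n` independent peers, `E[B - Vₙ] = B 2^{-n}` for every `n ≥ 0`;
consequently the Poisson mixture (mean `(B+1)ρ`) of `E[B - Vₙ]` equals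
`B exp(-ρ(B+1)/2)`; that is, the steady-state mean number of available blocks is
`E[V] = B(1 - exp(-ρ(B+1)/2))`. -/
theorem stmt14 (B : ℕ) (hB : 1 ≤ B) (ρ : ℝ) (hρ : 0 ≤ ρ) :
    (∀ n : ℕ,
      (∑ f : Fin n → Finset (Fin B),
        (∏ u, wnu B (f u)) * ((B : ℝ) - (Finset.univ.biUnion f).card))
        = (B : ℝ) / 2 ^ n) ∧
    (∑' n : ℕ, Real.exp (-(((B : ℝ) + 1) * ρ)) * (((B : ℝ) + 1) * ρ) ^ n / n.factorial *
        ((B : ℝ) / 2 ^ n))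
      = (B : ℝ) * Real.exp (-(ρ * ((B : ℝ) + 1) / 2)) ∧
    (∑' n : ℕ, Real.exp (-(((B : ℝ) + 1) * ρ)) * (((B : ℝ) + 1) * ρ) ^ n / n.factorial *
        (∑ f : Fin n → Finset (Fin B),
          (∏ u, wnu B (f u)) * ((Finset.univ.biUnion f).card : ℝ)))
      = (B : ℝ) * (1 - Real.exp (-(ρ * ((B : ℝ) + 1) / 2))) :=
  stmt14_general B ρ
end

section
/- For every integer B ≥ 1 and every real ρ ≥ 0, the quantity p̂(B,ρ) = ∑_{l=0}^{B} C(B,l) (−1)^l e^{−(B+1)ρ·l/(l+1)} satisfies the Bonferroni bounds 1 − B·e^{−(B+1)ρ/2} ≤ p̂(B,ρ) ≤ 1 − B·e^{−(B+1)ρ/2} + (B(B−1)/2)·e^{−2(B+1)ρ/3}. -/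
/-!
The sequence `a l = exp (-(c l / (l + 1))) = exp (-c) * exp (c / (l + 1))` with `c = (B + 1) ρ ≥ 0`
is completely monotone: `l ↦ 1 / (l + 1)` is (its `n`-th alternating difference at `k` is the
Beta value `n! k! / (n + k + 1)!`), and complete monotonicity is stable under products,
nonnegative scalings and convergent sums, hence under `exp`. For a completely monotone sequence,
Pascal's rule and induction on `B` show that the tail `∑_{l ≥ j} C(B,l) (-1)^l a l` has the sign
`(-1)^j`; the cases `j = 2` and `j = 3` are the two bounds.
-/

/-- The paper's closed-form steady-state swarm self-sustainability
`p̂(B,ρ) = ∑_{l=0}^{B} C(B,l) (-1)^l e^{-(B+1)ρ l/(l+1)}`. -/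
noncomputable def phat (B : ℕ) (ρ : ℝ) : ℝ :=
  ∑ l ∈ Finset.range (B + 1),
    (B.choose l : ℝ) * (-1 : ℝ) ^ l * Real.exp (-(((B : ℝ) + 1) * ρ * l / ((l : ℝ) + 1)))

open Finset fwdDiff

def IsCompletelyMonotone (f : ℕ → ℝ) : Prop :=
  ∀ n k, 0 ≤ (-1 : ℝ) ^ n * Δ_[1] ^[n] f k

theorem neg_one_pow_mul_fwdDiff_iter_eq_sum (f : ℕ → ℝ) (n k : ℕ) :
    (-1 : ℝ) ^ n * Δ_[1] ^[n] f k =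
      ∑ j ∈ range (n + 1), (-1 : ℝ) ^ j * n.choose j * f (k + j) := by
  rw [fwdDiff_iter_eq_sum_shift, mul_sum]
  refine sum_congr rfl fun j hj => ?_
  have hjn : j ≤ n := Nat.lt_succ_iff.mp (mem_range.mp hj)
  have hsign : (-1 : ℝ) ^ n * (-1) ^ (n - j) = (-1) ^ j := by
    rw [← pow_add, show n + (n - j) = j + 2 * (n - j) by omega, pow_add, pow_mul]
    norm_num
  simp only [zsmul_eq_mul, smul_eq_mul, mul_one]
  push_cast
  rw [← hsign]
  ring

theorem neg_one_pow_succ_mul_fwdDiff_iter_succ (f : ℕ → ℝ) (n k : ℕ) :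
    (-1 : ℝ) ^ (n + 1) * Δ_[1] ^[n + 1] f k = (-1 : ℝ) ^ n * Δ_[1] ^[n] (-Δ_[1] f) k := by
  rw [Function.iterate_succ_apply, ← neg_one_smul ℝ (Δ_[1] f), fwdDiff_iter_const_smul]
  simp only [Pi.smul_apply, smul_eq_mul]
  ring

namespace IsCompletelyMonotone

variable {f g : ℕ → ℝ}

theorem nonneg (hf : IsCompletelyMonotone f) (k : ℕ) : 0 ≤ f k := by
  simpa using hf 0 k

theorem comp_add_one (hf : IsCompletelyMonotone f) :
    IsCompletelyMonotone (fun k => f (k + 1)) := fun n k => by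
  rw [fwdDiff_iter_comp_add]
  exact hf n (k + 1)

theorem neg_fwdDiff (hf : IsCompletelyMonotone f) : IsCompletelyMonotone (-Δ_[1] f) :=
  fun n k => by
  rw [← neg_one_pow_succ_mul_fwdDiff_iter_succ]
  exact hf (n + 1) k

theorem one : IsCompletelyMonotone 1 := by
  rintro (_ | n) k
  · simp
  · have hΔ (c : ℝ) : Δ_[1] (fun _ : ℕ => c) = 0 := fwdDiff_const 1 c
    rw [Function.iterate_succ_apply, Pi.one_def, hΔ, Pi.zero_def, Function.iterate_fixed (hΔ 0)]
    simp

theorem const_smul (hf : IsCompletelyMonotone f) {c : ℝ} (hc : 0 ≤ c) :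
    IsCompletelyMonotone (c • f) := fun n k => by
  rw [fwdDiff_iter_const_smul, Pi.smul_apply, smul_eq_mul, mul_left_comm]
  exact mul_nonneg hc (hf n k)

theorem mul (hf : IsCompletelyMonotone f) (hg : IsCompletelyMonotone g) :
    IsCompletelyMonotone (f * g) := by
  intro n
  induction n generalizing f g with
  | zero => intro k; simpa using mul_nonneg (hf.nonneg k) (hg.nonneg k)
  | succ n ih =>
    intro k
    have leibniz : -Δ_[1] (f * g) = (-Δ_[1] f) * (fun k => g (k + 1)) + f * (-Δ_[1] g) := by
      ext k
      simp only [fwdDiff, Pi.neg_apply, Pi.mul_apply, Pi.add_apply]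
      ring
    rw [neg_one_pow_succ_mul_fwdDiff_iter_succ, leibniz, fwdDiff_iter_add, Pi.add_apply, mul_add]
    exact add_nonneg (ih hf.neg_fwdDiff hg.comp_add_one k) (ih hf hg.neg_fwdDiff k)

theorem pow (hf : IsCompletelyMonotone f) (m : ℕ) : IsCompletelyMonotone (f ^ m) := by
  induction m with
  | zero => simpa using one
  | succ m ih => simpa [pow_succ] using ih.mul hf

theorem of_hasSum {F : ℕ → ℕ → ℝ} (hF : ∀ m, IsCompletelyMonotone (F m)) (hsum : HasSum F f) :
    IsCompletelyMonotone f := fun n k => by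
  have hterms : HasSum (fun m => (-1 : ℝ) ^ n * Δ_[1] ^[n] (F m) k)
      ((-1 : ℝ) ^ n * Δ_[1] ^[n] f k) := by
    simp only [neg_one_pow_mul_fwdDiff_iter_eq_sum]
    exact hasSum_sum fun j _ => (Pi.hasSum.mp hsum (k + j)).mul_left _
  exact hterms.nonneg fun m => hF m n k

theorem exp (hf : IsCompletelyMonotone f) : IsCompletelyMonotone (fun k => Real.exp (f k)) := by
  refine of_hasSum (F := fun m => (m.factorial : ℝ)⁻¹ • f ^ m)
    (fun m => (hf.pow m).const_smul (by positivity)) (Pi.hasSum.mpr fun k => ?_)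
  simpa [Real.exp_eq_exp_ℝ, div_eq_inv_mul] using NormedSpace.expSeries_div_hasSum_exp (f k)

end IsCompletelyMonotone

theorem neg_one_pow_mul_fwdDiff_iter_inv_succ (n k : ℕ) :
    (-1 : ℝ) ^ n * Δ_[1] ^[n] (fun k : ℕ => ((k : ℝ) + 1)⁻¹) k =
      n.factorial * k.factorial / (n + k + 1).factorial := by
  induction n generalizing k with
  | zero =>
    rw [pow_zero, one_mul, Function.iterate_zero_apply, zero_add, Nat.factorial_succ,
      Nat.factorial_zero]
    push_cast
    field_simp
  | succ n ih =>
    rw [Function.iterate_succ_apply', fwdDiff, pow_succ,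
      show ∀ x y : ℝ, (-1) ^ n * (-1) * (x - y) = (-1) ^ n * y - (-1) ^ n * x by intros; ring,
      ih, ih, show n + (k + 1) + 1 = n + k + 1 + 1 by omega,
      show n + 1 + k + 1 = n + k + 1 + 1 by omega]
    simp only [Nat.factorial_succ]
    push_cast
    field_simp
    ring

theorem isCompletelyMonotone_inv_succ : IsCompletelyMonotone (fun k : ℕ => ((k : ℝ) + 1)⁻¹) :=
  fun n k => by
  rw [neg_one_pow_mul_fwdDiff_iter_inv_succ]
  positivity

theorem isCompletelyMonotone_exp_neg_mul_div_succ {c : ℝ} (hc : 0 ≤ c) :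
    IsCompletelyMonotone (fun l : ℕ => Real.exp (-(c * l / (l + 1)))) := by
  have h := (isCompletelyMonotone_inv_succ.const_smul hc).exp.const_smul (Real.exp_pos (-c)).le
  convert h using 1
  ext l
  simp only [Pi.smul_apply, smul_eq_mul, ← Real.exp_add]
  congr 1
  field_simp
  ring

theorem sum_range_choose_add_mul_of_lt (g : ℕ → ℝ) (j : ℕ) {B N : ℕ} (h : B < N) :
    ∑ i ∈ range N, (B.choose (j + i) : ℝ) * g i =
      ∑ i ∈ range (B + 1), (B.choose (j + i) : ℝ) * g i := by
  refine (sum_subset (range_subset_range.2 h) fun i _ hi => ?_).symm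
  simp only [mem_range, not_lt] at hi
  rw [Nat.choose_eq_zero_of_lt (by omega), Nat.cast_zero, zero_mul]

/-- `(-1) ^ j` times the tail `∑_{j ≤ l ≤ B} C(B,l) (-1)^l a l`; summing over `i ≤ B` instead of
`i ≤ B - j` costs only vanishing terms and avoids truncated subtraction. -/
def binomialTail (a : ℕ → ℝ) (j B : ℕ) : ℝ :=
  ∑ i ∈ range (B + 1), (B.choose (j + i) : ℝ) * ((-1) ^ i * a (j + i))

theorem binomialTail_succ_succ (a : ℕ → ℝ) (j B : ℕ) :
    binomialTail a (j + 1) (B + 1) =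
      binomialTail a (j + 1) B + binomialTail (fun k => a (k + 1)) j B := by
  unfold binomialTail
  rw [← sum_range_choose_add_mul_of_lt _ _ (Nat.lt_succ_self (B + 1)),
    ← sum_range_choose_add_mul_of_lt _ _ (by omega : B < B + 1 + 1),
    ← sum_range_choose_add_mul_of_lt _ _ (by omega : B < B + 1 + 1), ← sum_add_distrib]
  refine sum_congr rfl fun i _ => ?_
  rw [show j + 1 + i = j + i + 1 by omega, Nat.choose_succ_succ', Nat.cast_add]
  ring

theorem IsCompletelyMonotone.binomialTail_nonneg {a : ℕ → ℝ} (ha : IsCompletelyMonotone a)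
    (j B : ℕ) : 0 ≤ binomialTail a j B := by
  induction j generalizing a B with
  | zero =>
    convert ha B 0 using 1
    rw [neg_one_pow_mul_fwdDiff_iter_eq_sum, binomialTail]
    refine sum_congr rfl fun i _ => ?_
    rw [zero_add]
    ring
  | succ j ih =>
    induction B with
    | zero => simp [binomialTail]
    | succ B ihB =>
      rw [binomialTail_succ_succ]
      exact add_nonneg ihB (ih ha.comp_add_one B)

theorem sum_range_choose_mul_eq_add_binomialTail (a : ℕ → ℝ) (B j : ℕ) :
    ∑ l ∈ range (B + 1), (B.choose l : ℝ) * (-1) ^ l * a l =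
      ∑ l ∈ range j, (B.choose l : ℝ) * (-1) ^ l * a l + (-1) ^ j * binomialTail a j B := by
  have hext := sum_range_choose_add_mul_of_lt (fun l => (-1) ^ l * a l) 0
    (by omega : B < j + (B + 1))
  simp only [zero_add, ← mul_assoc] at hext
  rw [← hext, sum_range_add, binomialTail, mul_sum]
  congr 1
  refine sum_congr rfl fun i _ => ?_
  rw [pow_add]
  ring

theorem IsCompletelyMonotone.bonferroni {a : ℕ → ℝ} (ha : IsCompletelyMonotone a) (B j : ℕ) :
    0 ≤ (-1) ^ j * (∑ l ∈ range (B + 1), (B.choose l : ℝ) * (-1) ^ l * a l -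
      ∑ l ∈ range j, (B.choose l : ℝ) * (-1) ^ l * a l) := by
  rw [sum_range_choose_mul_eq_add_binomialTail a B j, add_sub_cancel_left, ← mul_assoc, ← pow_add,
    Even.neg_one_pow ⟨j, rfl⟩, one_mul]
  exact ha.binomialTail_nonneg j B

theorem stmt15_general (B : ℕ) (ρ : ℝ) (hρ : 0 ≤ ρ) :
    1 - (B : ℝ) * Real.exp (-(((B : ℝ) + 1) * ρ / 2)) ≤ phat B ρ ∧
    phat B ρ ≤ 1 - (B : ℝ) * Real.exp (-(((B : ℝ) + 1) * ρ / 2)) +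
      ((B : ℝ) * ((B : ℝ) - 1) / 2) * Real.exp (-(2 * ((B : ℝ) + 1) * ρ / 3)) := by
  have ha := isCompletelyMonotone_exp_neg_mul_div_succ (by positivity : 0 ≤ ((B : ℝ) + 1) * ρ)
  have first_two : ∑ l ∈ range 2, (B.choose l : ℝ) * (-1) ^ l *
      Real.exp (-(((B : ℝ) + 1) * ρ * l / ((l : ℝ) + 1))) =
        1 - (B : ℝ) * Real.exp (-(((B : ℝ) + 1) * ρ / 2)) := by
    norm_num [sum_range_succ, sub_eq_add_neg]
  have first_three : ∑ l ∈ range 3, (B.choose l : ℝ) * (-1) ^ l *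
      Real.exp (-(((B : ℝ) + 1) * ρ * l / ((l : ℝ) + 1))) =
        1 - (B : ℝ) * Real.exp (-(((B : ℝ) + 1) * ρ / 2)) +
          ((B : ℝ) * ((B : ℝ) - 1) / 2) * Real.exp (-(2 * ((B : ℝ) + 1) * ρ / 3)) := by
    norm_num [sum_range_succ, Nat.cast_choose_two]
    ring_nf
  have lower := ha.bonferroni B 2
  have upper := ha.bonferroni B 3
  beta_reduce at lower upper
  rw [first_two] at lower
  rw [first_three] at upper
  change 0 ≤ _ * (phat B ρ - _) at lower upper
  constructor <;> linarith

/-- for every integer `B ≥ 1` and every real `ρ ≥ 0`, the Bonferroni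
bounds `1 - B e^{-(B+1)ρ/2} ≤ p̂(B,ρ) ≤ 1 - B e^{-(B+1)ρ/2} + (B(B-1)/2) e^{-2(B+1)ρ/3}`
hold. -/
theorem stmt15 (B : ℕ) (hB : 1 ≤ B) (ρ : ℝ) (hρ : 0 ≤ ρ) :
    1 - (B : ℝ) * Real.exp (-(((B : ℝ) + 1) * ρ / 2)) ≤ phat B ρ ∧
    phat B ρ ≤ 1 - (B : ℝ) * Real.exp (-(((B : ℝ) + 1) * ρ / 2)) +
      ((B : ℝ) * ((B : ℝ) - 1) / 2) * Real.exp (-(2 * ((B : ℝ) + 1) * ρ / 3)) :=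
  stmt15_general B ρ hρ
end

section
/- Let p̂(B,ρ) = ∑_{l=0}^{B} C(B,l) (−1)^l e^{−(B+1)ρ·l/(l+1)}. If B ≥ 4 is an integer and ρ ≥ 1.6 is real, then p̂(B,ρ) ≤ p̂(B+1,ρ); that is, swarm self-sustainability increases with the file size B. -/
open Finset

/- Auxiliary: the exponential as a tsum. -/
private lemma exp_tsum (y : ℝ) : Real.exp y = ∑' k : ℕ, y ^ k / (Nat.factorial k) := by
  rw [Real.exp_eq_exp_ℝ, NormedSpace.exp_eq_tsum_div]

/- Tangent-line inequality for convex powers. -/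
private lemma tangent (n : ℕ) (u s : ℝ) (hu : 0 ≤ u) (hs : 0 ≤ s) :
    s ^ (n + 1) + ((n : ℝ) + 1) * s ^ n * (u - s) ≤ u ^ (n + 1) := by
  have hg := geom_sum₂_mul u s (n + 1)
  have key : ((n : ℝ) + 1) * s ^ n * (u - s) ≤ u ^ (n + 1) - s ^ (n + 1) := by
    rw [← hg]
    rcases le_total s u with h | h
    · have hsum : ((n : ℝ) + 1) * s ^ n ≤ ∑ i ∈ range (n + 1), u ^ i * s ^ (n + 1 - 1 - i) := by
        have hterm : ∀ i ∈ range (n + 1), s ^ n ≤ u ^ i * s ^ (n + 1 - 1 - i) := by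
          intro i hi
          have hin : i ≤ n := by
            have := Finset.mem_range.mp hi; omega
          have h1 : s ^ i ≤ u ^ i := pow_le_pow_left₀ hs h i
          have h2 : s ^ n = s ^ i * s ^ (n - i) := by
            rw [← pow_add, Nat.add_sub_cancel' hin]
          rw [show n + 1 - 1 - i = n - i from by omega, h2]
          exact mul_le_mul_of_nonneg_right h1 (pow_nonneg hs _)
        calc ((n : ℝ) + 1) * s ^ n = ∑ _i ∈ range (n + 1), s ^ n := by
              rw [Finset.sum_const, Finset.card_range, nsmul_eq_mul]; push_cast; ring
          _ ≤ _ := Finset.sum_le_sum hterm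
      exact mul_le_mul_of_nonneg_right hsum (by linarith)
    · have hsum : ∑ i ∈ range (n + 1), u ^ i * s ^ (n + 1 - 1 - i) ≤ ((n : ℝ) + 1) * s ^ n := by
        have hterm : ∀ i ∈ range (n + 1), u ^ i * s ^ (n + 1 - 1 - i) ≤ s ^ n := by
          intro i hi
          have hin : i ≤ n := by
            have := Finset.mem_range.mp hi; omega
          have h1 : u ^ i ≤ s ^ i := pow_le_pow_left₀ hu h i
          have h2 : s ^ n = s ^ i * s ^ (n - i) := by
            rw [← pow_add, Nat.add_sub_cancel' hin]
          rw [show n + 1 - 1 - i = n - i from by omega, h2]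
          exact mul_le_mul_of_nonneg_right h1 (pow_nonneg hs _)
        calc ∑ i ∈ range (n + 1), u ^ i * s ^ (n + 1 - 1 - i)
            ≤ ∑ _i ∈ range (n + 1), s ^ n := Finset.sum_le_sum hterm
          _ = ((n : ℝ) + 1) * s ^ n := by
              rw [Finset.sum_const, Finset.card_range, nsmul_eq_mul]; push_cast; ring
      exact mul_le_mul_of_nonpos_right hsum (by linarith)
  linarith

/- AM-GM / Bernoulli step: `u^B ≤ ((B u + 1)/(B+1))^(B+1)` on `[0,1]`. -/
private lemma amgm (B : ℕ) (hB : 1 ≤ B) (u : ℝ) (hu0 : 0 ≤ u) (hu1 : u ≤ 1) :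
    u ^ B ≤ (((B : ℝ) * u + 1) / ((B : ℝ) + 1)) ^ (B + 1) := by
  have hB1 : (0:ℝ) < (B : ℝ) + 1 := by positivity
  rcases eq_or_lt_of_le hu0 with h0 | hu
  · rw [← h0, zero_pow (by omega : B ≠ 0)]
    positivity
  · have hune : u ≠ 0 := ne_of_gt hu
    set a : ℝ := (1 / u - 1) / ((B : ℝ) + 1) with ha
    have h1u : 1 ≤ 1 / u := one_le_one_div hu hu1
    have ha0 : 0 ≤ a := div_nonneg (by linarith) hB1.le
    have hpow : 1 + ((B : ℝ) + 1) * a ≤ (1 + a) ^ (B + 1) := by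
      have h := one_add_mul_le_pow (by linarith : (-2:ℝ) ≤ a) (B + 1)
      push_cast at h
      linarith
    have h1ua : 1 + ((B : ℝ) + 1) * a = 1 / u := by
      rw [ha]; field_simp; ring
    have hv : ((B : ℝ) * u + 1) / ((B : ℝ) + 1) = u * (1 + a) := by
      rw [ha]; field_simp; ring
    have h2 : 1 / u ≤ (1 + a) ^ (B + 1) := by rw [← h1ua]; exact hpow
    rw [hv, mul_pow]
    calc u ^ B = u ^ (B + 1) * (1 / u) := by
          rw [pow_succ]; field_simp
      _ ≤ u ^ (B + 1) * (1 + a) ^ (B + 1) :=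
          mul_le_mul_of_nonneg_left h2 (by positivity)

/- Core positivity: if a polynomial is nonnegative on `[0,1]`, so are its
`(l+1)^{-k}`-weighted coefficient sums. -/
private lemma core (N : ℕ) : ∀ (k : ℕ) (a : ℕ → ℝ),
    (∀ x ∈ Set.Icc (0:ℝ) 1, 0 ≤ ∑ l ∈ range N, a l * x ^ l) →
    0 ≤ ∑ l ∈ range N, a l / ((l : ℝ) + 1) ^ k := by
  intro k
  induction k with
  | zero =>
    intro a h
    have := h 1 (by constructor <;> norm_num)
    simpa using this
  | succ k ih =>
    intro a h
    have key : ∀ x ∈ Set.Icc (0:ℝ) 1, 0 ≤ ∑ l ∈ range N, (a l / ((l : ℝ) + 1)) * x ^ l := by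
      intro x hx
      rcases eq_or_lt_of_le hx.1 with h0 | hxpos
      · have he : ∀ l ∈ range N, a l / ((l : ℝ) + 1) * x ^ l = a l / ((l : ℝ) + 1) * x ^ l := fun _ _ => rfl
        have heq : ∑ l ∈ range N, (a l / ((l : ℝ) + 1)) * x ^ l
            = ∑ l ∈ range N, (a l / ((l : ℝ) + 1)) * x ^ l := rfl
        -- at x = 0 compare with the value of the original polynomial at 0
        have h00 := h x hx
        have hcongr : ∑ l ∈ range N, (a l / ((l : ℝ) + 1)) * x ^ l
            = ∑ l ∈ range N, a l * x ^ l := by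
          refine Finset.sum_congr rfl fun l _ => ?_
          rcases Nat.eq_zero_or_pos l with rfl | hl
          · norm_num
          · rw [← h0, zero_pow (by omega : l ≠ 0)]; ring
        rw [hcongr]
        exact h00
      · have hint : ∫ t in (0:ℝ)..x, (∑ l ∈ range N, a l * t ^ l)
            = (∑ l ∈ range N, (a l / ((l : ℝ) + 1)) * x ^ l) * x := by
          rw [intervalIntegral.integral_finset_sum
            (fun i _ => (intervalIntegral.intervalIntegrable_pow i).const_mul (a i))]
          rw [Finset.sum_mul]
          refine Finset.sum_congr rfl fun l _ => ?_
          rw [intervalIntegral.integral_const_mul, integral_pow]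
          have hl : ((l : ℝ) + 1) ≠ 0 := by positivity
          rw [zero_pow (Nat.succ_ne_zero l)]
          field_simp
          ring
        have hnn : 0 ≤ ∫ t in (0:ℝ)..x, (∑ l ∈ range N, a l * t ^ l) := by
          apply intervalIntegral.integral_nonneg hx.1
          intro u hu
          exact h u ⟨hu.1, hu.2.trans hx.2⟩
        rw [hint] at hnn
        exact le_of_mul_le_mul_right (by simpa using hnn) hxpos
    have hstep := ih (fun l => a l / ((l : ℝ) + 1)) key
    calc (0:ℝ) ≤ ∑ l ∈ range N, (a l / ((l : ℝ) + 1)) / ((l : ℝ) + 1) ^ k := hstep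
      _ = ∑ l ∈ range N, a l / ((l : ℝ) + 1) ^ (k + 1) := by
          refine Finset.sum_congr rfl fun l _ => ?_
          rw [div_div, ← pow_succ']

/- Moment positivity: nonnegative weighted coefficient sums give the
exponential-moment inequality. -/
private lemma momsum (N : ℕ) (c : ℝ) (hc : 0 ≤ c) (a : ℕ → ℝ)
    (h : ∀ k : ℕ, 0 ≤ ∑ l ∈ range N, a l / ((l : ℝ) + 1) ^ k) :
    0 ≤ ∑ l ∈ range N, a l * Real.exp (-(c * l / ((l : ℝ) + 1))) := by
  have key : ∀ l : ℕ, Real.exp (-(c * l / ((l : ℝ) + 1)))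
      = Real.exp (-c) * ∑' k : ℕ, (c / ((l : ℝ) + 1)) ^ k / (Nat.factorial k) := by
    intro l
    rw [← exp_tsum, ← Real.exp_add]
    congr 1
    have hl : ((l : ℝ) + 1) ≠ 0 := by positivity
    field_simp
    ring
  have hsummable : ∀ l ∈ range N, Summable
      (fun k : ℕ => (Real.exp (-c) * a l) * ((c / ((l : ℝ) + 1)) ^ k / (Nat.factorial k))) :=
    fun l _ => (Real.summable_pow_div_factorial _).mul_left _
  have e1 : ∑ l ∈ range N, a l * Real.exp (-(c * l / ((l : ℝ) + 1)))
      = ∑ l ∈ range N, ∑' k : ℕ,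
          (Real.exp (-c) * a l) * ((c / ((l : ℝ) + 1)) ^ k / (Nat.factorial k)) := by
    refine Finset.sum_congr rfl fun l _ => ?_
    rw [key l, tsum_mul_left]
    ring
  rw [e1, ← Summable.tsum_finsetSum hsummable]
  apply tsum_nonneg
  intro k
  have e2 : ∑ l ∈ range N, (Real.exp (-c) * a l) * ((c / ((l : ℝ) + 1)) ^ k / (Nat.factorial k))
      = (Real.exp (-c) * c ^ k / (Nat.factorial k)) * ∑ l ∈ range N, a l / ((l : ℝ) + 1) ^ k := by
    rw [Finset.mul_sum]
    refine Finset.sum_congr rfl fun l _ => ?_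
    rw [div_pow]
    ring
  rw [e2]
  exact mul_nonneg
    (div_nonneg (mul_nonneg (Real.exp_pos _).le (pow_nonneg hc _)) (Nat.cast_nonneg _)) (h k)

/- Binomial expansion of `(1-y)^n`. -/
private lemma binom_sum (n : ℕ) (y : ℝ) :
    ∑ l ∈ range (n + 1), (n.choose l : ℝ) * (-1) ^ l * y ^ l = (1 - y) ^ n := by
  rw [show (1:ℝ) - y = -y + 1 from by ring, add_pow]
  refine Finset.sum_congr rfl fun l _ => ?_
  rw [neg_pow]
  ring

/- Key pointwise lemma: `(1-x)^B ≤ q(x)` on `[0,1]`. -/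
private lemma KL (B : ℕ) (hB : 4 ≤ B) (ρ : ℝ) (hρ : 1.6 ≤ ρ) (x : ℝ)
    (hx0 : 0 ≤ x) (hx1 : x ≤ 1) :
    (1 - x) ^ B ≤ ∑ l ∈ range (B + 2),
      ((B + 1).choose l : ℝ) * (-1) ^ l * x ^ l * Real.exp (-(ρ * l / ((l : ℝ) + 1))) := by
  have hρ0 : (0:ℝ) ≤ ρ := by linarith
  set m : ℝ := Real.exp (-(ρ / 2)) with hm
  have hm0 : 0 < m := Real.exp_pos _
  have hm45 : m ≤ 4 / 5 := by
    have h1 : m ≤ Real.exp (-(4 / 5)) := Real.exp_le_exp.mpr (by linarith)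
    have h3 : (5 / 4 : ℝ) ≤ Real.exp (4 / 5) := by
      have := Real.add_one_le_exp (4 / 5 : ℝ)
      linarith
    have h2 : Real.exp (-(4 / 5)) ≤ 4 / 5 := by
      rw [Real.exp_neg]
      have h4 : (5 / 4 : ℝ)⁻¹ = 4 / 5 := by norm_num
      calc (Real.exp (4 / 5))⁻¹ ≤ (5 / 4 : ℝ)⁻¹ :=
            inv_anti₀ (by norm_num) h3
        _ = 4 / 5 := h4
    linarith
  have hmB : m ≤ (B : ℝ) / ((B : ℝ) + 1) := by
    have hc4 : (4:ℝ) ≤ (B : ℝ) := by exact_mod_cast hB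
    have : (4:ℝ) / 5 ≤ (B : ℝ) / ((B : ℝ) + 1) := by
      rw [div_le_div_iff₀ (by norm_num) (by positivity)]
      linarith
    linarith
  have hxm : x * m ≤ 1 := by nlinarith
  set s : ℝ := 1 - x * m with hs
  have hs0 : 0 ≤ s := by rw [hs]; linarith
  set α : ℝ := s ^ (B + 1) with hα
  set β : ℝ := ((B : ℝ) + 1) * x * s ^ B with hβ
  set e : ℕ → ℝ := fun l => if l = 0 then α + β * m else if l = 1 then -β else 0 with he
  have hesplit : ∀ g : ℕ → ℝ, ∑ l ∈ range (B + 2), e l * g l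
      = (α + β * m) * g 0 + (-β) * g 1 := by
    intro g
    have h2sub : range 2 ⊆ range (B + 2) := Finset.range_subset_range.mpr (by omega)
    have hz : ∀ l ∈ range (B + 2), l ∉ range 2 → e l * g l = 0 := by
      intro l _ hl
      have h0 : l ≠ 0 := by intro h'; exact hl (by simp [h'])
      have h1 : l ≠ 1 := by intro h'; exact hl (by simp [h'])
      simp [he, h0, h1]
    rw [← Finset.sum_subset h2sub hz, Finset.sum_range_succ, Finset.sum_range_one]
    simp [he]
  -- coefficients of q(x)·t^l minus the tangent line
  have hcore : ∀ k : ℕ, 0 ≤ ∑ l ∈ range (B + 2),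
      (((B + 1).choose l : ℝ) * (-1) ^ l * x ^ l - e l) / ((l : ℝ) + 1) ^ k := by
    refine fun k => core (B + 2) k
      (fun l => ((B + 1).choose l : ℝ) * (-1) ^ l * x ^ l - e l) ?_
    intro t ht
    have hxt : x * t ≤ 1 := by nlinarith [ht.1, ht.2]
    have hu0 : 0 ≤ 1 - x * t := by linarith
    have hsum1 : ∑ l ∈ range (B + 2), ((B + 1).choose l : ℝ) * (-1) ^ l * x ^ l * t ^ l
        = (1 - x * t) ^ (B + 1) := by
      rw [← binom_sum (B + 1) (x * t)]
      refine Finset.sum_congr rfl fun l _ => ?_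
      rw [mul_pow]
      ring
    have hsplit : ∑ l ∈ range (B + 2),
        (((B + 1).choose l : ℝ) * (-1) ^ l * x ^ l - e l) * t ^ l
        = (∑ l ∈ range (B + 2), ((B + 1).choose l : ℝ) * (-1) ^ l * x ^ l * t ^ l)
          - ∑ l ∈ range (B + 2), e l * t ^ l := by
      rw [← Finset.sum_sub_distrib]
      exact Finset.sum_congr rfl fun l _ => by ring
    rw [hsplit, hsum1, hesplit (fun l => t ^ l)]
    have htang := tangent B (1 - x * t) s hu0 hs0
    have hlin : (α + β * m) * t ^ (0:ℕ) + (-β) * t ^ (1:ℕ)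
        = s ^ (B + 1) + ((B : ℝ) + 1) * s ^ B * ((1 - x * t) - s) := by
      rw [hα, hβ, hs]
      ring
    rw [hlin]
    linarith
  have hM := momsum (B + 2) ρ hρ0
    (fun l => ((B + 1).choose l : ℝ) * (-1) ^ l * x ^ l - e l) hcore
  have hesum : ∑ l ∈ range (B + 2), e l * Real.exp (-(ρ * l / ((l : ℝ) + 1))) = α := by
    rw [hesplit (fun l => Real.exp (-(ρ * l / ((l : ℝ) + 1))))]
    have h0 : Real.exp (-(ρ * (0:ℕ) / (((0:ℕ) : ℝ) + 1))) = 1 := by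
      norm_num
    have h1 : Real.exp (-(ρ * (1:ℕ) / (((1:ℕ) : ℝ) + 1))) = m := by
      rw [hm]
      norm_num
    rw [h0, h1]
    ring
  have hsplit2 : ∑ l ∈ range (B + 2),
      (((B + 1).choose l : ℝ) * (-1) ^ l * x ^ l - e l) * Real.exp (-(ρ * l / ((l : ℝ) + 1)))
      = (∑ l ∈ range (B + 2),
          ((B + 1).choose l : ℝ) * (-1) ^ l * x ^ l * Real.exp (-(ρ * l / ((l : ℝ) + 1))))
        - ∑ l ∈ range (B + 2), e l * Real.exp (-(ρ * l / ((l : ℝ) + 1))) := by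
    rw [← Finset.sum_sub_distrib]
    exact Finset.sum_congr rfl fun l _ => by ring
  rw [hsplit2, hesum] at hM
  -- step 2 : (1-x)^B ≤ α
  have hub : ((B : ℝ) * (1 - x) + 1) / ((B : ℝ) + 1) ≤ s := by
    have hmm : x * m ≤ x * ((B : ℝ) / ((B : ℝ) + 1)) := mul_le_mul_of_nonneg_left hmB hx0
    have heq : 1 - x * ((B : ℝ) / ((B : ℝ) + 1)) = ((B : ℝ) * (1 - x) + 1) / ((B : ℝ) + 1) := by
      field_simp
      ring
    rw [hs]
    linarith [hmm, heq]
  have hnum : (0:ℝ) ≤ ((B : ℝ) * (1 - x) + 1) / ((B : ℝ) + 1) := by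
    have hBc : (0:ℝ) ≤ (B : ℝ) := Nat.cast_nonneg B
    have : (0:ℝ) ≤ (B : ℝ) * (1 - x) := mul_nonneg hBc (by linarith)
    positivity
  have step2 : (1 - x) ^ B ≤ α := by
    rw [hα]
    calc (1 - x) ^ B ≤ (((B : ℝ) * (1 - x) + 1) / ((B : ℝ) + 1)) ^ (B + 1) :=
          amgm B (by omega) (1 - x) (by linarith) (by linarith)
      _ ≤ s ^ (B + 1) := pow_le_pow_left₀ hnum hub (B + 1)
  linarith

/-- if `B ≥ 4` is an integer and `ρ ≥ 1.6` is real, then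
`p̂(B,ρ) ≤ p̂(B+1,ρ)`: swarm self-sustainability increases with the file size. -/
theorem stmt16 (B : ℕ) (hB : 4 ≤ B) (ρ : ℝ) (hρ : 1.6 ≤ ρ) :
    phat B ρ ≤ phat (B + 1) ρ := by
  have hρ0 : (0:ℝ) ≤ ρ := by linarith
  have hc0 : (0:ℝ) ≤ ((B : ℝ) + 1) * ρ := by positivity
  have hpt : ∀ x ∈ Set.Icc (0:ℝ) 1, 0 ≤ ∑ l ∈ range (B + 2),
      (((B + 1).choose l : ℝ) * (-1) ^ l * Real.exp (-(ρ * l / ((l : ℝ) + 1)))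
        - (B.choose l : ℝ) * (-1) ^ l) * x ^ l := by
    intro x hx
    have hKL := KL B hB ρ hρ x hx.1 hx.2
    have hbin : ∑ l ∈ range (B + 2), (B.choose l : ℝ) * (-1) ^ l * x ^ l = (1 - x) ^ B := by
      rw [Finset.sum_range_succ]
      have hz : (B.choose (B + 1) : ℝ) = 0 := by
        rw [Nat.choose_eq_zero_of_lt (by omega)]; norm_num
      rw [hz]
      rw [binom_sum B x]
      ring
    have hsplit : ∑ l ∈ range (B + 2),
        (((B + 1).choose l : ℝ) * (-1) ^ l * Real.exp (-(ρ * l / ((l : ℝ) + 1)))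
          - (B.choose l : ℝ) * (-1) ^ l) * x ^ l
        = (∑ l ∈ range (B + 2),
            ((B + 1).choose l : ℝ) * (-1) ^ l * x ^ l * Real.exp (-(ρ * l / ((l : ℝ) + 1))))
          - ∑ l ∈ range (B + 2), (B.choose l : ℝ) * (-1) ^ l * x ^ l := by
      rw [← Finset.sum_sub_distrib]
      exact Finset.sum_congr rfl fun l _ => by ring
    rw [hsplit, hbin]
    linarith
  have hker : ∀ k : ℕ, 0 ≤ ∑ l ∈ range (B + 2),
      (((B + 1).choose l : ℝ) * (-1) ^ l * Real.exp (-(ρ * l / ((l : ℝ) + 1)))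
        - (B.choose l : ℝ) * (-1) ^ l) / ((l : ℝ) + 1) ^ k :=
    fun k => core (B + 2) k _ hpt
  have hM := momsum (B + 2) (((B : ℝ) + 1) * ρ) hc0
    (fun l => ((B + 1).choose l : ℝ) * (-1) ^ l * Real.exp (-(ρ * l / ((l : ℝ) + 1)))
      - (B.choose l : ℝ) * (-1) ^ l) hker
  have hexpand : ∑ l ∈ range (B + 2),
      (((B + 1).choose l : ℝ) * (-1) ^ l * Real.exp (-(ρ * l / ((l : ℝ) + 1)))
        - (B.choose l : ℝ) * (-1) ^ l)
        * Real.exp (-((((B : ℝ) + 1) * ρ) * l / ((l : ℝ) + 1)))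
      = phat (B + 1) ρ - phat B ρ := by
    have h1 : ∀ l ∈ range (B + 2),
        (((B + 1).choose l : ℝ) * (-1) ^ l * Real.exp (-(ρ * l / ((l : ℝ) + 1)))
          - (B.choose l : ℝ) * (-1) ^ l)
          * Real.exp (-((((B : ℝ) + 1) * ρ) * l / ((l : ℝ) + 1)))
        = ((B + 1).choose l : ℝ) * (-1) ^ l
            * Real.exp (-((((B + 1 : ℕ) : ℝ) + 1) * ρ * l / ((l : ℝ) + 1)))
          - (B.choose l : ℝ) * (-1) ^ l
            * Real.exp (-(((B : ℝ) + 1) * ρ * l / ((l : ℝ) + 1))) := by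
      intro l _
      have hcomb : Real.exp (-(ρ * l / ((l : ℝ) + 1)))
          * Real.exp (-((((B : ℝ) + 1) * ρ) * l / ((l : ℝ) + 1)))
          = Real.exp (-((((B + 1 : ℕ) : ℝ) + 1) * ρ * l / ((l : ℝ) + 1))) := by
        rw [← Real.exp_add]
        congr 1
        push_cast
        ring
      rw [sub_mul, mul_assoc, hcomb]
    have h3 : ∑ l ∈ range (B + 2), ((B + 1).choose l : ℝ) * (-1) ^ l
        * Real.exp (-((((B + 1 : ℕ) : ℝ) + 1) * ρ * l / ((l : ℝ) + 1)))
        = phat (B + 1) ρ := rfl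
    have h2 : ∑ l ∈ range (B + 2), (B.choose l : ℝ) * (-1) ^ l
        * Real.exp (-(((B : ℝ) + 1) * ρ * l / ((l : ℝ) + 1)))
        = phat B ρ := by
      simp only [phat]
      rw [Finset.sum_range_succ]
      have hz : (B.choose (B + 1) : ℝ) = 0 := by
        rw [Nat.choose_eq_zero_of_lt (by omega)]; norm_num
      rw [hz]
      ring
    rw [Finset.sum_congr rfl h1, Finset.sum_sub_distrib, h3, h2]
  rw [hexpand] at hM
  linarith
end

section
/- If B ≥ 4 is an integer and ρ ≥ 1.6 is real, then 1 − B·e^{−(B+1)ρ/2} + (B(B−1)/2)·e^{−2(B+1)ρ/3} ≤ 1 − (B+1)·e^{−(B+2)ρ/2}; equivalently, (B+1)·e^{−(B+2)ρ/2} + (B(B−1)/2)·e^{−2(B+1)ρ/3} ≤ B·e^{−(B+1)ρ/2}. -/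
/-!
Factoring out `e^{-(B+1)ρ/2}`, the second inequality becomes
`(B+1) e^{-ρ/2} + (B(B-1)/2) e^{-(B+1)ρ/6} ≤ B`, whose left side decreases in `ρ`, so it suffices
to take `ρ = 8/5`. There `e^{-4/5} ≤ 5/11`, and bounding `e^{-4(B+1)/15}` by the inverse of the
cubic Taylor polynomial of `e^{4(B+1)/15}` leaves a polynomial inequality in `B`, valid for `B ≥ 4`.
The first inequality is the second one rearranged.
-/

open Real

lemma cubic_le_exp_of_nonneg {x : ℝ} (hx : 0 ≤ x) : 1 + x + x ^ 2 / 2 + x ^ 3 / 6 ≤ exp x := by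
  convert sum_le_exp_of_nonneg hx 4 using 1
  simp [Finset.sum_range_succ, Nat.factorial]

lemma exp_neg_le_inv_cubic {x : ℝ} (hx : 0 ≤ x) :
    exp (-x) ≤ (1 + x + x ^ 2 / 2 + x ^ 3 / 6)⁻¹ := by
  rw [exp_neg]
  exact inv_anti₀ (by positivity) (cubic_le_exp_of_nonneg hx)

lemma exp_neg_half_le {ρ : ℝ} (hρ : 8 / 5 ≤ ρ) : exp (-(ρ / 2)) ≤ 5 / 11 :=
  calc exp (-(ρ / 2)) ≤ exp (-(4 / 5)) := exp_le_exp.2 (by linarith)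
    _ ≤ (1 + 4 / 5 + (4 / 5) ^ 2 / 2 + (4 / 5) ^ 3 / 6)⁻¹ := exp_neg_le_inv_cubic (by norm_num)
    _ ≤ 5 / 11 := by norm_num

lemma choose_two_mul_exp_neg_le {b ρ : ℝ} (hb : 4 ≤ b) (hρ : 8 / 5 ≤ ρ) :
    b * (b - 1) / 2 * exp (-((b + 1) * ρ / 6)) ≤ (6 * b - 5) / 11 := by
  set y := 4 * (b + 1) / 15 with hy_def
  have hy : 0 ≤ y := by positivity
  have hcubic : 0 < 1 + y + y ^ 2 / 2 + y ^ 3 / 6 := by positivity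
  have hexp : exp (-((b + 1) * ρ / 6)) ≤ (1 + y + y ^ 2 / 2 + y ^ 3 / 6)⁻¹ :=
    (exp_le_exp.2 (by nlinarith)).trans (exp_neg_le_inv_cubic hy)
  calc b * (b - 1) / 2 * exp (-((b + 1) * ρ / 6))
      ≤ b * (b - 1) / 2 * (1 + y + y ^ 2 / 2 + y ^ 3 / 6)⁻¹ :=
        mul_le_mul_of_nonneg_left hexp (by nlinarith)
    _ ≤ (6 * b - 5) / 11 := by
        rw [← div_eq_mul_inv, div_le_iff₀ hcubic, hy_def]
        nlinarith [mul_nonneg (mul_nonneg (sub_nonneg.2 hb) (sub_nonneg.2 hb)) (sub_nonneg.2 hb),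
          mul_nonneg (sub_nonneg.2 hb) (sub_nonneg.2 hb)]

lemma succ_mul_exp_neg_half_add_choose_two_mul_exp_neg_le {b ρ : ℝ} (hb : 4 ≤ b)
    (hρ : 8 / 5 ≤ ρ) :
    (b + 1) * exp (-(ρ / 2)) + b * (b - 1) / 2 * exp (-((b + 1) * ρ / 6)) ≤ b := by
  have h₁ : (b + 1) * exp (-(ρ / 2)) ≤ (b + 1) * (5 / 11) :=
    mul_le_mul_of_nonneg_left (exp_neg_half_le hρ) (by linarith)
  linarith [choose_two_mul_exp_neg_le hb hρ]

/-- if `B ≥ 4` is an integer and `ρ ≥ 1.6` is real, then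
`1 - B e^{-(B+1)ρ/2} + (B(B-1)/2) e^{-2(B+1)ρ/3} ≤ 1 - (B+1) e^{-(B+2)ρ/2}`;
equivalently, `(B+1) e^{-(B+2)ρ/2} + (B(B-1)/2) e^{-2(B+1)ρ/3} ≤ B e^{-(B+1)ρ/2}`. -/
theorem stmt17 (B : ℕ) (hB : 4 ≤ B) (ρ : ℝ) (hρ : 1.6 ≤ ρ) :
    (1 - (B : ℝ) * Real.exp (-(((B : ℝ) + 1) * ρ / 2)) +
        ((B : ℝ) * ((B : ℝ) - 1) / 2) * Real.exp (-(2 * ((B : ℝ) + 1) * ρ / 3))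
      ≤ 1 - ((B : ℝ) + 1) * Real.exp (-(((B : ℝ) + 2) * ρ / 2))) ∧
    (((B : ℝ) + 1) * Real.exp (-(((B : ℝ) + 2) * ρ / 2)) +
        ((B : ℝ) * ((B : ℝ) - 1) / 2) * Real.exp (-(2 * ((B : ℝ) + 1) * ρ / 3))
      ≤ (B : ℝ) * Real.exp (-(((B : ℝ) + 1) * ρ / 2))) := by
  have hb : (4 : ℝ) ≤ B := by exact_mod_cast hB
  have hρ' : (8 / 5 : ℝ) ≤ ρ := by norm_num at hρ ⊢; exact hρ
  set E := exp (-(((B : ℝ) + 1) * ρ / 2))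
  have e₁ : exp (-(((B : ℝ) + 2) * ρ / 2)) = E * exp (-(ρ / 2)) := by
    rw [← exp_add]; ring_nf
  have e₂ : exp (-(2 * ((B : ℝ) + 1) * ρ / 3)) = E * exp (-(((B : ℝ) + 1) * ρ / 6)) := by
    rw [← exp_add]; ring_nf
  have key : ((B : ℝ) + 1) * exp (-(((B : ℝ) + 2) * ρ / 2)) +
      (B : ℝ) * ((B : ℝ) - 1) / 2 * exp (-(2 * ((B : ℝ) + 1) * ρ / 3)) ≤ (B : ℝ) * E :=
    calc _ = E * (((B : ℝ) + 1) * exp (-(ρ / 2)) +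
          (B : ℝ) * ((B : ℝ) - 1) / 2 * exp (-(((B : ℝ) + 1) * ρ / 6))) := by
          rw [e₁, e₂]; ring
      _ ≤ E * B := mul_le_mul_of_nonneg_left
          (succ_mul_exp_neg_half_add_choose_two_mul_exp_neg_le hb hρ') (exp_pos _).le
      _ = B * E := mul_comm _ _
  exact ⟨by linarith, key⟩
end

section
/- Fix integers B ≥ 1 and 0 ≤ k ≤ B, and fix a subset W of {1,…,B} with |W| = B−k. Let σ be a uniformly random permutation (ordering) of {1,…,B}. Then for every integer 0 ≤ b ≤ B−k, the expected number of indices m ∈ {0,1,…,B} such that exactly b elements of W appear among the first m positions of σ equals (B+1)/(B−k+1). -/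
/-!
Only the set `σ⁻¹ W` of positions of the white balls matters, and since the permutations act
transitively on the `(B - k)`-subsets, this set is uniformly distributed among them. Counting the
pairs `(T, m)` of a `(B - k)`-subset `T` and an `m ≤ B` with exactly `b` elements of `T` below `m`
by `m` first gives `∑ m, C(m, b) C(B - m, B - k - b) = C(B + 1, B - k + 1)`, and
`C(B + 1, B - k + 1) / C(B, B - k) = (B + 1) / (B - k + 1)`.
-/

open Finset
open scoped Pointwise

theorem Nat.sum_range_choose_mul_choose_sub (b : ℕ) :
    ∀ n c : ℕ, ∑ m ∈ range (n + 1), m.choose b * (n - m).choose c = (n + 1).choose (b + c + 1)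
  | n, 0 => by
      simp only [Nat.choose_zero_right, mul_one, add_zero]
      rw [← Nat.sum_Icc_choose]
      refine (sum_subset (fun m hm => ?_) fun m _ hm => Nat.choose_eq_zero_of_lt ?_).symm <;>
        simp_all
  | 0, c + 1 => by simp [Nat.choose_eq_zero_of_lt]
  | n + 1, c + 1 => by
      rw [sum_range_succ, Nat.sub_self, Nat.choose_zero_succ, mul_zero, add_zero]
      have pascal : ∀ m ∈ range (n + 1), m.choose b * (n + 1 - m).choose (c + 1)
          = m.choose b * (n - m).choose (c + 1) + m.choose b * (n - m).choose c := by
        intro m hm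
        rw [Nat.sub_add_comm (by simpa [Nat.lt_succ_iff] using hm), Nat.choose_succ_succ']
        ring
      rw [sum_congr rfl pascal, sum_add_distrib, Nat.sum_range_choose_mul_choose_sub b n (c + 1),
        Nat.sum_range_choose_mul_choose_sub b n c, add_comm, ← add_assoc b c 1,
        ← Nat.choose_succ_succ']

theorem Finset.card_powersetCard_filter_card_inter {α : Type*} [DecidableEq α] (s I : Finset α)
    {w b : ℕ} (hb : b ≤ w) :
    #{T ∈ s.powersetCard w | #(T ∩ I) = b}
      = (#(s ∩ I)).choose b * (#(s \ I)).choose (w - b) := by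
  rw [← card_powersetCard, ← card_powersetCard, ← card_product]
  refine card_bij' (fun T _ => (T ∩ I, T \ I)) (fun P _ => P.1 ∪ P.2) ?_ ?_ ?_ ?_
  · intro T hT
    simp only [mem_filter, mem_powersetCard] at hT
    have := card_inter_add_card_sdiff T I
    simp only [mem_product, mem_powersetCard]
    exact ⟨⟨inter_subset_inter_right hT.1.1, hT.2⟩, sdiff_subset_sdiff hT.1.1 le_rfl, by omega⟩
  · rintro ⟨A, C⟩ hP
    simp only [mem_product, mem_powersetCard, subset_inter_iff, subset_sdiff] at hP
    obtain ⟨⟨⟨hAs, hAI⟩, hA⟩, ⟨hCs, hCI⟩, hC⟩ := hP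
    have hAC : Disjoint A C := disjoint_of_subset_left hAI hCI.symm
    simp only [mem_filter, mem_powersetCard, union_subset_iff, union_inter_distrib_right,
      inter_eq_left.2 hAI, disjoint_iff_inter_eq_empty.1 hCI, union_empty,
      card_union_of_disjoint hAC]
    exact ⟨⟨⟨hAs, hCs⟩, by omega⟩, hA⟩
  · intro T _
    exact sup_inf_sdiff T I
  · rintro ⟨A, C⟩ hP
    simp only [mem_product, mem_powersetCard, subset_inter_iff, subset_sdiff] at hP
    obtain ⟨⟨⟨-, hAI⟩, -⟩, ⟨-, hCI⟩, -⟩ := hP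
    simp [union_inter_distrib_right, inter_eq_left.2 hAI, disjoint_iff_inter_eq_empty.1 hCI,
      union_sdiff_distrib, sdiff_eq_empty_iff_subset.2 hAI, hCI.sdiff_eq_left]

theorem MulAction.card_nsmul_sum_smul {G X M : Type*} [Group G] [Fintype G] [MulAction G X]
    [Fintype X] [MulAction.IsPretransitive G X] [AddCommMonoid M] (f : X → M) (x : X) :
    Fintype.card X • ∑ g : G, f (g • x) = Fintype.card G • ∑ y, f y := by
  have orbit_sum : ∀ y : X, ∑ g : G, f (g • y) = ∑ g : G, f (g • x) := by
    intro y
    obtain ⟨h, rfl⟩ := MulAction.exists_smul_eq G x y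
    exact Fintype.sum_equiv (Equiv.mulRight h) _ _ fun g => by simp [mul_smul]
  calc Fintype.card X • ∑ g : G, f (g • x) = ∑ y : X, ∑ g : G, f (g • y) := by
        simp [orbit_sum]
    _ = ∑ g : G, ∑ y, f (g • y) := sum_comm
    _ = ∑ g : G, ∑ y, f y :=
        sum_congr rfl fun g _ => Fintype.sum_bijective _ (MulAction.bijective g) _ _ fun _ => rfl
    _ = Fintype.card G • ∑ y, f y := by simp

theorem Equiv.Perm.choose_nsmul_sum_smul_finset {α M : Type*} [Fintype α] [DecidableEq α]
    [AddCommMonoid M] (f : Finset α → M) {T₀ : Finset α} {w : ℕ} (hT₀ : #T₀ = w) :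
    (Fintype.card α).choose w • ∑ σ : Equiv.Perm α, f (σ • T₀)
      = (Fintype.card α).factorial • ∑ T ∈ powersetCard w univ, f T := by
  have := Set.powersetCard.isPretransitive (α := α) (n := w)
  have h := MulAction.card_nsmul_sum_smul (G := Equiv.Perm α) (X := Set.powersetCard α w)
    (fun T => f T) (Set.powersetCard.ofCard hT₀)
  rw [← Nat.card_eq_fintype_card, Set.powersetCard.card, Nat.card_eq_fintype_card,
    Fintype.card_perm] at h
  rw [sum_subtype (p := (· ∈ Set.powersetCard α w)) _ (by simp [Set.powersetCard.mem_iff])]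
  exact h

theorem Fin.sum_powersetCard_card_filter_card_filter_lt (n : ℕ) {w b : ℕ} (hb : b ≤ w) :
    ∑ T ∈ powersetCard w (univ : Finset (Fin n)), #{m ∈ range (n + 1) | #{i ∈ T | ↑i < m} = b}
      = (n + 1).choose (w + 1) := by
  have vandermonde := Nat.sum_range_choose_mul_choose_sub b n (w - b)
  rw [Nat.add_sub_cancel' hb] at vandermonde
  rw [← vandermonde]
  refine (sum_card_bipartiteAbove_eq_sum_card_bipartiteBelow _).trans
    (sum_congr rfl fun m hm => ?_)
  set I := univ.filter fun i : Fin n => (i : ℕ) < m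
  have hI : #I = m := by
    rw [Fin.card_filter_val_lt]
    rw [mem_range] at hm
    omega
  have hfilter : ∀ T : Finset (Fin n), T.filter (fun i : Fin n => (i : ℕ) < m) = T ∩ I := by
    intro T; ext; simp [I]
  rw [bipartiteBelow, filter_congr fun T _ => by rw [hfilter T],
    card_powersetCard_filter_card_inter _ _ hb, univ_inter, card_univ_sdiff, hI, Fintype.card_fin]

theorem stmt19_general (B k b : ℕ) (hk : k ≤ B) (W : Finset (Fin B))
    (hW : W.card = B - k) (hb : b ≤ B - k) :
    ((∑ σ : Equiv.Perm (Fin B),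
        ((Finset.range (B + 1)).filter (fun m =>
          (Finset.univ.filter (fun i : Fin B => (i : ℕ) < m ∧ σ i ∈ W)).card = b)).card
        : ℕ) : ℝ) / (Nat.factorial B)
      = ((B : ℝ) + 1) / ((B : ℝ) - k + 1) := by
  set f : Finset (Fin B) → ℕ := fun T => #{m ∈ range (B + 1) | #{i ∈ T | ↑i < m} = b}
  have positions (σ : Equiv.Perm (Fin B)) (m : ℕ) :
      univ.filter (fun i : Fin B => (i : ℕ) < m ∧ σ i ∈ W)
        = (σ⁻¹ • W).filter fun i : Fin B => (i : ℕ) < m := by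
    ext i; simp [mem_inv_smul_finset_iff, and_comm]
  have hsum : ∑ σ : Equiv.Perm (Fin B), #{m ∈ range (B + 1) |
      #(univ.filter fun i : Fin B => (i : ℕ) < m ∧ σ i ∈ W) = b}
        = ∑ σ : Equiv.Perm (Fin B), f (σ • W) := by
    simp only [positions]
    exact Fintype.sum_equiv (Equiv.inv _) _ _ fun σ => rfl
  have hcount : B.choose (B - k) * ∑ σ : Equiv.Perm (Fin B), f (σ • W)
      = B.factorial * (B + 1).choose (B - k + 1) := by
    have := Equiv.Perm.choose_nsmul_sum_smul_finset f hW
    rwa [Fintype.card_fin, Fin.sum_powersetCard_card_filter_card_filter_lt B hb, smul_eq_mul,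
      smul_eq_mul] at this
  have key : (∑ σ : Equiv.Perm (Fin B), f (σ • W)) * (B - k + 1) = (B + 1) * B.factorial := by
    refine Nat.eq_of_mul_eq_mul_left (Nat.choose_pos (Nat.sub_le B k)) ?_
    rw [← mul_assoc, hcount, mul_assoc, ← Nat.add_one_mul_choose_eq]
    ring
  have hw : (B : ℝ) - k + 1 = ((B - k : ℕ) : ℝ) + 1 := by rw [Nat.cast_sub hk]
  rw [hsum, hw, div_eq_div_iff (by positivity) (by positivity)]
  exact_mod_cast key

/-- fix `B ≥ 1`, `0 ≤ k ≤ B` and a set `W` of white balls with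
`|W| = B - k`. For a uniformly random ordering `σ` of the `B` balls and every
`0 ≤ b ≤ B - k`, the expected number of indices `m ∈ {0, 1, …, B}` such that
exactly `b` white balls appear among the first `m` positions of `σ` equals
`(B+1)/(B-k+1)`. -/
theorem stmt19 (B k b : ℕ) (hB : 1 ≤ B) (hk : k ≤ B) (W : Finset (Fin B))
    (hW : W.card = B - k) (hb : b ≤ B - k) :
    ((∑ σ : Equiv.Perm (Fin B),
        ((Finset.range (B + 1)).filter (fun m =>
          (Finset.univ.filter (fun i : Fin B => (i : ℕ) < m ∧ σ i ∈ W)).card = b)).card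
        : ℕ) : ℝ) / (Nat.factorial B)
      = ((B : ℝ) + 1) / ((B : ℝ) - k + 1) :=
  stmt19_general B k b hk W hW hb
end
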